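/- arXiv:2310.02818 — 8 statements merged into one kernel-verified Lean document; each statement's English description precedes it below -/
import Mathlib

section
/- For any two disjoint subsets J, K ⊆ I, the cone σ_{J,K} is strongly convex (salient), i.e. σ_{J,K} ∩ (−σ_{J,K}) = {0}. -/
open Matrix

/-- The `j`-th simple coroot `α^∨_j := Σ_i C_{ij} e_i`, i.e. the `j`-th column of `C`. -/
def acoroot {n : ℕ} (C : Matrix (Fin n) (Fin n) ℝ) (j : Fin n) : Fin n → ℝ :=
  fun i => C i j

/-- The cone `σ_{J,K}` of nonnegative linear combinations of the `-α^∨_j` (`j ∈ J`)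
and the standard basis vectors `e_k` (`k ∈ K`). -/
def sigmaCone {n : ℕ} (C : Matrix (Fin n) (Fin n) ℝ) (J K : Finset (Fin n)) :
    Set (Fin n → ℝ) :=
  {v | ∃ x y : Fin n → ℝ, (∀ j ∈ J, 0 ≤ x j) ∧ (∀ k ∈ K, 0 ≤ y k) ∧
    v = (∑ j ∈ J, x j • (-acoroot C j)) + ∑ k ∈ K, y k • (Pi.single k 1 : Fin n → ℝ)}

/-!
If `v` and `-v` both lie in `σ_{J,K}`, adding their representations gives a nonnegative
combination of the generators `-α^∨_j`, `e_k` that vanishes. These generators are linearly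
independent: on the coordinates in `J`, which `K` avoids, the combination reads `-C_J a`, and the
principal submatrix `C_J` is invertible, so the `J`-coefficients vanish, and then so do the
`K`-coefficients. By nonnegativity every coefficient of `v` is zero.
-/

section

variable {n : ℕ} (C : Matrix (Fin n) (Fin n) ℝ) (J K : Finset (Fin n))

def coneComb (x y : Fin n → ℝ) : Fin n → ℝ :=
  (∑ j ∈ J, x j • (-acoroot C j)) + ∑ k ∈ K, y k • (Pi.single k 1 : Fin n → ℝ)

lemma coneComb_add (x y x' y' : Fin n → ℝ) :
    coneComb C J K x y + coneComb C J K x' y' = coneComb C J K (x + x') (y + y') := by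
  simp only [coneComb, Pi.add_apply, add_smul, Finset.sum_add_distrib]
  abel

lemma coneComb_apply (x y : Fin n → ℝ) (i : Fin n) :
    coneComb C J K x y i = -∑ j ∈ J, C i j * x j + if i ∈ K then y i else 0 := by
  simp [coneComb, Finset.sum_apply, Pi.single_apply, acoroot, mul_comm]

lemma coneComb_eq_zero {x y : Fin n → ℝ} (hx : ∀ j ∈ J, x j = 0) (hy : ∀ k ∈ K, y k = 0) :
    coneComb C J K x y = 0 := by
  rw [coneComb, Finset.sum_eq_zero fun j hj => by rw [hx j hj, zero_smul],
    Finset.sum_eq_zero fun k hk => by rw [hy k hk, zero_smul], add_zero]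

lemma mem_sigmaCone_iff {v : Fin n → ℝ} :
    v ∈ sigmaCone C J K ↔ ∃ x y : Fin n → ℝ, (∀ j ∈ J, 0 ≤ x j) ∧ (∀ k ∈ K, 0 ≤ y k) ∧
      v = coneComb C J K x y :=
  Iff.rfl

lemma zero_mem_sigmaCone : (0 : Fin n → ℝ) ∈ sigmaCone C J K :=
  ⟨0, 0, fun _ _ => le_rfl, fun _ _ => le_rfl,
    (coneComb_eq_zero C J K (fun _ _ => rfl) fun _ _ => rfl).symm⟩

lemma eq_zero_of_coneComb_eq_zero (hJK : Disjoint J K)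
    (hC : IsUnit (C.submatrix (fun a : J => (a : Fin n)) (fun a : J => (a : Fin n))))
    {x y : Fin n → ℝ} (h : coneComb C J K x y = 0) :
    (∀ j ∈ J, x j = 0) ∧ ∀ k ∈ K, y k = 0 := by
  have hx : (fun a : J => x a) = 0 := by
    refine Matrix.mulVec_injective_of_isUnit hC ?_
    rw [Matrix.mulVec_zero]
    ext i
    have hi := congrFun h i
    rw [coneComb_apply, if_neg (Finset.disjoint_left.mp hJK i.2), Pi.zero_apply] at hi
    simp only [Matrix.mulVec, dotProduct, Matrix.submatrix_apply, Pi.zero_apply]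
    rw [Finset.sum_coe_sort J (fun j => C i j * x j)]
    linarith
  have hxJ : ∀ j ∈ J, x j = 0 := fun j hj => congrFun hx ⟨j, hj⟩
  refine ⟨hxJ, fun k hk => ?_⟩
  have hk' := congrFun h k
  rw [coneComb_apply, if_pos hk, Finset.sum_eq_zero fun j hj => by rw [hxJ j hj, mul_zero]] at hk'
  simpa using hk'

end

theorem stmt_1_general
    (n : ℕ) (C : Matrix (Fin n) (Fin n) ℝ)
    (hprin : ∀ S : Finset (Fin n), S.Nonempty →
      IsUnit (C.submatrix (fun a : S => (a : Fin n)) (fun a : S => (a : Fin n))) ∧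
      ∀ i j : S,
        0 ≤ (C.submatrix (fun a : S => (a : Fin n)) (fun a : S => (a : Fin n)))⁻¹ i j)
    (J K : Finset (Fin n)) (hJK : Disjoint J K) :
    sigmaCone C J K ∩ (-sigmaCone C J K) = {0} := by
  have hCJ : IsUnit (C.submatrix (fun a : J => (a : Fin n)) (fun a : J => (a : Fin n))) := by
    rcases J.eq_empty_or_nonempty with rfl | hJ
    · exact isUnit_of_subsingleton _
    · exact (hprin J hJ).1
  refine Set.eq_singleton_iff_unique_mem.mpr ⟨⟨zero_mem_sigmaCone C J K, ?_⟩, ?_⟩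
  · rw [Set.mem_neg, neg_zero]
    exact zero_mem_sigmaCone C J K
  rintro v ⟨hv, hv'⟩
  obtain ⟨x, y, hx, hy, rfl⟩ := (mem_sigmaCone_iff C J K).mp hv
  obtain ⟨x', y', hx', hy', hv'⟩ := (mem_sigmaCone_iff C J K).mp hv'
  have hsum : coneComb C J K (x + x') (y + y') = 0 := by
    rw [← coneComb_add, ← hv', add_neg_cancel]
  obtain ⟨hxx', hyy'⟩ := eq_zero_of_coneComb_eq_zero C J K hJK hCJ hsum
  exact coneComb_eq_zero C J K
    (fun j hj => ((add_eq_zero_iff_of_nonneg (hx j hj) (hx' j hj)).mp (hxx' j hj)).1)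
    (fun k hk => ((add_eq_zero_iff_of_nonneg (hy k hk) (hy' k hk)).mp (hyy' k hk)).1)

theorem stmt_1
    (n : ℕ) (hn : 1 ≤ n) (C : Matrix (Fin n) (Fin n) ℝ)
    (hdiag : ∀ i, C i i = 2)
    (hoff : ∀ i j, i ≠ j → C i j ≤ 0)
    (hprin : ∀ S : Finset (Fin n), S.Nonempty →
      IsUnit (C.submatrix (fun a : S => (a : Fin n)) (fun a : S => (a : Fin n))) ∧
      ∀ i j : S,
        0 ≤ (C.submatrix (fun a : S => (a : Fin n)) (fun a : S => (a : Fin n)))⁻¹ i j)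
    (J K : Finset (Fin n)) (hJK : Disjoint J K) :
    sigmaCone C J K ∩ (-sigmaCone C J K) = {0} :=
  stmt_1_general n C hprin J K hJK
end

section
/- Let J, K ⊆ I be disjoint and P, Q ⊆ I be disjoint, and suppose a vector v ∈ ℝ^n has two expressions v = Σ_{j∈J} x_j (−α^∨_j) + Σ_{k∈K} x_k e_k = Σ_{p∈P} y_p (−α^∨_p) + Σ_{q∈Q} y_q e_q with all coefficients x_j, x_k, y_p, y_q nonnegative real numbers. Then x_j = 0 for every j ∈ J \ P. -/
/-!
Pair both expressions with a functional `t ≥ 0` supported on `J` whose values on the coroots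
`α^∨_p`, `p ∈ J`, are `0` on `P` and `1` off `P`; it exists because the principal submatrix of `C`
on `J` has a nonnegative inverse. Since `t` vanishes on `K` and pairs nonpositively with
`α^∨_p` for `p ∉ J` (the off-diagonal entries of `C` are `≤ 0`), the first expression pairs to
`-∑_{j ∈ J \ P} x_j ≤ 0` and the second to something `≥ 0`.
-/

open Matrix

open Finset

theorem Matrix.vecMul_apply_eq_sum_of_support_subset {R ι : Type*}
    [NonUnitalNonAssocSemiring R] [Fintype ι] {t : ι → R} {J : Finset ι}
    (htJ : ∀ i ∉ J, t i = 0) (C : Matrix ι ι R) (p : ι) :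
    (t ᵥ* C) p = ∑ i ∈ J, t i * C i p :=
  (sum_subset (subset_univ J) fun i _ hi => by rw [htJ i hi, zero_mul]).symm

section InverseNonneg

variable {R ι : Type*} [Field R] [LinearOrder R] [IsStrictOrderedRing R]
  [Fintype ι] [DecidableEq ι]

theorem Matrix.exists_nonneg_vecMul_eq_of_inv_nonneg {A : Matrix ι ι R} (hA : IsUnit A)
    (hinv : ∀ i j, 0 ≤ A⁻¹ i j) {b : ι → R} (hb : 0 ≤ b) : ∃ t, 0 ≤ t ∧ t ᵥ* A = b :=
  ⟨b ᵥ* A⁻¹, fun i => sum_nonneg fun p _ => mul_nonneg (hb p) (hinv p i), by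
    rw [vecMul_vecMul, nonsing_inv_mul A ((isUnit_iff_isUnit_det A).mp hA), vecMul_one]⟩

theorem Matrix.exists_nonneg_vecMul_eq_on {C : Matrix ι ι R} {J : Finset ι}
    (hJ : IsUnit (C.submatrix (fun a : J => (a : ι)) (fun a : J => (a : ι))))
    (hinv : ∀ i j : J, 0 ≤ (C.submatrix (fun a : J => (a : ι)) (fun a : J => (a : ι)))⁻¹ i j)
    {b : ι → R} (hb : ∀ p ∈ J, 0 ≤ b p) :
    ∃ t : ι → R, 0 ≤ t ∧ (∀ i ∉ J, t i = 0) ∧ ∀ p ∈ J, (t ᵥ* C) p = b p := by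
  obtain ⟨s, hs, hsb⟩ :=
    exists_nonneg_vecMul_eq_of_inv_nonneg hJ hinv (b := fun p : J => b p) fun p => hb p p.2
  refine ⟨fun i => if h : i ∈ J then s ⟨i, h⟩ else 0, fun i => ?_,
    fun i hi => dif_neg hi, fun p hp => ?_⟩
  · dsimp only
    split_ifs
    exacts [hs _, le_rfl]
  · rw [vecMul_apply_eq_sum_of_support_subset (fun i hi => dif_neg hi), ← sum_coe_sort J,
      ← congrFun hsb ⟨p, hp⟩]
    exact sum_congr rfl fun i _ => by simp

end InverseNonneg

theorem Matrix.vecMul_apply_nonpos_of_notMem {R ι : Type*} [Semiring R] [PartialOrder R]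
    [IsOrderedRing R] [Fintype ι] {C : Matrix ι ι R} (hoff : ∀ i j, i ≠ j → C i j ≤ 0)
    {t : ι → R} (ht : 0 ≤ t) {J : Finset ι} (htJ : ∀ i ∉ J, t i = 0) {p : ι}
    (hp : p ∉ J) : (t ᵥ* C) p ≤ 0 := by
  rw [vecMul_apply_eq_sum_of_support_subset htJ]
  exact sum_nonpos fun i hi =>
    mul_nonpos_of_nonneg_of_nonpos (ht i) (hoff i p (ne_of_mem_of_not_mem hi hp))

theorem dotProduct_coneCombination {n : ℕ} (C : Matrix (Fin n) (Fin n) ℝ) (t : Fin n → ℝ)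
    (J K : Finset (Fin n)) (x y : Fin n → ℝ) :
    t ⬝ᵥ ((∑ j ∈ J, x j • (-acoroot C j)) + ∑ k ∈ K, y k • (Pi.single k 1 : Fin n → ℝ)) =
      ∑ k ∈ K, y k * t k - ∑ j ∈ J, x j * (t ᵥ* C) j := by
  simp only [dotProduct_add, dotProduct_sum, dotProduct_smul, dotProduct_neg,
    dotProduct_single, mul_one, smul_eq_mul, mul_neg, sum_neg_distrib]
  rw [add_comm, ← sub_eq_add_neg]
  rfl

theorem stmt_3_general
    (n : ℕ) (C : Matrix (Fin n) (Fin n) ℝ)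
    (hoff : ∀ i j, i ≠ j → C i j ≤ 0)
    (hprin : ∀ S : Finset (Fin n), S.Nonempty →
      IsUnit (C.submatrix (fun a : S => (a : Fin n)) (fun a : S => (a : Fin n))) ∧
      ∀ i j : S,
        0 ≤ (C.submatrix (fun a : S => (a : Fin n)) (fun a : S => (a : Fin n)))⁻¹ i j)
    (J K : Finset (Fin n)) (hJK : Disjoint J K)
    (P Q : Finset (Fin n))
    (x y : Fin n → ℝ)
    (hxJ : ∀ j ∈ J, 0 ≤ x j)
    (hyP : ∀ p ∈ P, 0 ≤ y p) (hyQ : ∀ q ∈ Q, 0 ≤ y q)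
    (heq : (∑ j ∈ J, x j • (-acoroot C j)) + ∑ k ∈ K, x k • (Pi.single k 1 : Fin n → ℝ)
         = (∑ p ∈ P, y p • (-acoroot C p)) + ∑ q ∈ Q, y q • (Pi.single q 1 : Fin n → ℝ)) :
    ∀ j ∈ J \ P, x j = 0 := by
  rcases J.eq_empty_or_nonempty with rfl | hJ
  · simp
  obtain ⟨t, ht, htJ, htC⟩ := exists_nonneg_vecMul_eq_on (hprin J hJ).1 (hprin J hJ).2
    (b := fun p => if p ∈ P then 0 else 1) fun p _ => by split_ifs <;> norm_num
  have hlhs : t ⬝ᵥ ((∑ j ∈ J, x j • (-acoroot C j)) + ∑ k ∈ K, x k • Pi.single k 1) =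
      -∑ j ∈ J \ P, x j := by
    rw [dotProduct_coneCombination, sum_eq_zero fun k hk => by rw [htJ k (disjoint_right.mp hJK hk),
      mul_zero], sum_congr rfl fun j hj => by rw [htC j hj], sdiff_eq_filter, sum_filter]
    simp
  have hrhs : 0 ≤ t ⬝ᵥ ((∑ p ∈ P, y p • (-acoroot C p)) + ∑ q ∈ Q, y q • Pi.single q 1) := by
    rw [dotProduct_coneCombination, sub_nonneg]
    refine (sum_nonpos fun p hp => mul_nonpos_of_nonneg_of_nonpos (hyP p hp) ?_).trans
      (sum_nonneg fun q hq => mul_nonneg (hyQ q hq) (ht q))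
    by_cases hpJ : p ∈ J
    · simp [htC p hpJ, hp]
    · exact vecMul_apply_nonpos_of_notMem hoff ht htJ hpJ
  have hxJP : ∀ j ∈ J \ P, 0 ≤ x j := fun j hj => hxJ j (mem_sdiff.mp hj).1
  rw [← heq, hlhs] at hrhs
  exact (sum_eq_zero_iff_of_nonneg hxJP).mp (le_antisymm (by linarith) (sum_nonneg hxJP))

theorem stmt_3
    (n : ℕ) (hn : 1 ≤ n) (C : Matrix (Fin n) (Fin n) ℝ)
    (hdiag : ∀ i, C i i = 2)
    (hoff : ∀ i j, i ≠ j → C i j ≤ 0)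
    (hprin : ∀ S : Finset (Fin n), S.Nonempty →
      IsUnit (C.submatrix (fun a : S => (a : Fin n)) (fun a : S => (a : Fin n))) ∧
      ∀ i j : S,
        0 ≤ (C.submatrix (fun a : S => (a : Fin n)) (fun a : S => (a : Fin n)))⁻¹ i j)
    (J K : Finset (Fin n)) (hJK : Disjoint J K)
    (P Q : Finset (Fin n)) (hPQ : Disjoint P Q)
    (x y : Fin n → ℝ)
    (hxJ : ∀ j ∈ J, 0 ≤ x j) (hxK : ∀ k ∈ K, 0 ≤ x k)
    (hyP : ∀ p ∈ P, 0 ≤ y p) (hyQ : ∀ q ∈ Q, 0 ≤ y q)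
    (heq : (∑ j ∈ J, x j • (-acoroot C j)) + ∑ k ∈ K, x k • (Pi.single k 1 : Fin n → ℝ)
         = (∑ p ∈ P, y p • (-acoroot C p)) + ∑ q ∈ Q, y q • (Pi.single q 1 : Fin n → ℝ)) :
    ∀ j ∈ J \ P, x j = 0 :=
  stmt_3_general n C hoff hprin J K hJK P Q x y hxJ hyP hyQ heq
end

section
/- Let J, K ⊆ I be disjoint and P, Q ⊆ I be disjoint. Then the intersection σ_{J,K} ∩ σ_{P,Q} is a face of σ_{J,K}, i.e. it is an extreme subset of σ_{J,K} (if x, y ∈ σ_{J,K} and some point of the open segment between x and y lies in σ_{J,K} ∩ σ_{P,Q}, then x and y both lie in σ_{J,K} ∩ σ_{P,Q}). -/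
open Matrix

lemma coordLemma {n : ℕ} (C : Matrix (Fin n) (Fin n) ℝ) (S T : Finset (Fin n))
    (x y : Fin n → ℝ) (i : Fin n) :
    ((∑ j ∈ S, x j • (-acoroot C j)) + ∑ k ∈ T, y k • (Pi.single k 1 : Fin n → ℝ)) i
      = -(∑ j ∈ S, C i j * x j) + (if i ∈ T then y i else 0) := by
  simp only [Pi.add_apply, Finset.sum_apply, Pi.smul_apply, Pi.neg_apply, acoroot,
    Pi.single_apply, smul_eq_mul, mul_ite, mul_one, mul_zero, mul_neg]
  rw [Finset.sum_ite_eq T i y, ← Finset.sum_neg_distrib]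
  congr 1
  exact Finset.sum_congr rfl (fun j _ => by ring)

lemma signLemma {n : ℕ} (C : Matrix (Fin n) (Fin n) ℝ)
    (hoff : ∀ i j, i ≠ j → C i j ≤ 0)
    (hprin : ∀ S : Finset (Fin n), S.Nonempty →
      IsUnit (C.submatrix (fun a : S => (a : Fin n)) (fun a : S => (a : Fin n))) ∧
      ∀ i j : S,
        0 ≤ (C.submatrix (fun a : S => (a : Fin n)) (fun a : S => (a : Fin n)))⁻¹ i j)
    (c : Fin n → ℝ)
    (h : ∀ i, 0 < c i → (∑ t, C i t * c t) ≤ 0) :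
    ∀ i, c i ≤ 0 := by
  intro i0
  by_contra hi0
  push_neg at hi0
  set A : Finset (Fin n) := Finset.univ.filter (fun i => 0 < c i) with hAdef
  have hmemA : ∀ i, i ∈ A ↔ 0 < c i := by intro i; simp [hAdef]
  have hA : A.Nonempty := ⟨i0, (hmemA i0).mpr hi0⟩
  obtain ⟨hunit, hinv⟩ := hprin A hA
  set M : Matrix A A ℝ := C.submatrix (fun a : A => (a : Fin n)) (fun a : A => (a : Fin n)) with hM
  set v : A → ℝ := fun a => c a with hv
  have hMv : ∀ a : A, (M *ᵥ v) a ≤ 0 := by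
    intro a
    have h1 : (M *ᵥ v) a = ∑ t ∈ A, C a t * c t := by
      rw [Matrix.mulVec, dotProduct]
      rw [← Finset.sum_coe_sort A (fun t => C a t * c t)]
      rfl
    have h2 : ∑ t ∈ A, C a t * c t ≤ ∑ t, C a t * c t := by
      apply Finset.sum_le_sum_of_subset_of_nonneg (Finset.subset_univ A)
      intro t _ htA
      have hne : (a : Fin n) ≠ t := by
        intro he; exact htA (he ▸ a.2)
      have h3 : C a t ≤ 0 := hoff _ _ hne
      have h4 : c t ≤ 0 := le_of_not_gt (fun hl => htA ((hmemA t).mpr hl))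
      nlinarith
    have h5 : 0 < c a := (hmemA a).mp a.2
    have := h a h5
    linarith [h1 ▸ h2.trans this]
  have hdet : IsUnit M.det := (Matrix.isUnit_iff_isUnit_det M).mp hunit
  have hvv : v = M⁻¹ *ᵥ (M *ᵥ v) := by
    rw [Matrix.mulVec_mulVec, Matrix.nonsing_inv_mul M hdet, Matrix.one_mulVec]
  set a0 : A := ⟨i0, (hmemA i0).mpr hi0⟩
  have : v a0 ≤ 0 := by
    rw [hvv]
    rw [Matrix.mulVec, dotProduct]
    apply Finset.sum_nonpos
    intro b _
    exact mul_nonpos_of_nonneg_of_nonpos (hinv a0 b) (hMv b)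
  have : c i0 ≤ 0 := this
  linarith

lemma keyLemma {n : ℕ} (C : Matrix (Fin n) (Fin n) ℝ)
    (hoff : ∀ i j, i ≠ j → C i j ≤ 0)
    (hprin : ∀ S : Finset (Fin n), S.Nonempty →
      IsUnit (C.submatrix (fun a : S => (a : Fin n)) (fun a : S => (a : Fin n))) ∧
      ∀ i j : S,
        0 ≤ (C.submatrix (fun a : S => (a : Fin n)) (fun a : S => (a : Fin n)))⁻¹ i j)
    (J K P Q : Finset (Fin n)) (hJK : Disjoint J K) (hPQ : Disjoint P Q)
    (x y u w : Fin n → ℝ)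
    (hx : ∀ j ∈ J, 0 ≤ x j) (hy : ∀ k ∈ K, 0 ≤ y k)
    (hu : ∀ p ∈ P, 0 ≤ u p) (hw : ∀ q ∈ Q, 0 ≤ w q)
    (heq : (∑ j ∈ J, x j • (-acoroot C j)) + ∑ k ∈ K, y k • (Pi.single k 1 : Fin n → ℝ)
         = (∑ p ∈ P, u p • (-acoroot C p)) + ∑ q ∈ Q, w q • (Pi.single q 1 : Fin n → ℝ)) :
    (∀ i, (if i ∈ J then x i else 0) = (if i ∈ P then u i else 0)) ∧
    (∀ i, (if i ∈ K then y i else 0) = (if i ∈ Q then w i else 0)) := by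
  set c : Fin n → ℝ := fun i => (if i ∈ J then x i else 0) - (if i ∈ P then u i else 0) with hc
  have hCc : ∀ i, (∑ t, C i t * c t)
      = (if i ∈ K then y i else 0) - (if i ∈ Q then w i else 0) := by
    intro i
    have h1 := congrFun heq i
    rw [coordLemma, coordLemma] at h1
    have e1 : ∑ t, C i t * c t
        = (∑ j ∈ J, C i j * x j) - (∑ p ∈ P, C i p * u p) := by
      simp only [hc, mul_sub]
      rw [Finset.sum_sub_distrib]
      congr 1
      · simp only [mul_ite, mul_zero]
        rw [Finset.sum_ite_mem, Finset.univ_inter]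
      · simp only [mul_ite, mul_zero]
        rw [Finset.sum_ite_mem, Finset.univ_inter]
    rw [e1]
    linarith
  have hcpos : ∀ i, c i ≤ 0 := by
    apply signLemma C hoff hprin
    intro i hci
    have hiJ : i ∈ J := by
      by_contra hiJ
      have hle : c i ≤ 0 := by
        show (if i ∈ J then x i else 0) - (if i ∈ P then u i else 0) ≤ 0
        rw [if_neg hiJ]
        split_ifs with hiP
        · linarith [hu i hiP]
        · linarith
      linarith
    have hiK : i ∉ K := Finset.disjoint_left.mp hJK hiJ
    rw [hCc i, if_neg hiK]
    split_ifs with hiQ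
    · have := hw i hiQ; linarith
    · linarith
  have hcneg : ∀ i, 0 ≤ c i := by
    have := signLemma C hoff hprin (fun i => -c i) ?_
    · intro i; have := this i; simpa using this
    intro i hci
    have hci' : c i < 0 := by
      have : (0:ℝ) < -c i := hci
      linarith
    have hiP : i ∈ P := by
      by_contra hiP
      have hge : 0 ≤ c i := by
        show 0 ≤ (if i ∈ J then x i else 0) - (if i ∈ P then u i else 0)
        rw [if_neg hiP]
        split_ifs with hiJ
        · linarith [hx i hiJ]
        · linarith
      linarith
    have hiQ : i ∉ Q := Finset.disjoint_left.mp hPQ hiP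
    have e2 : ∑ t, C i t * -c t = -∑ t, C i t * c t := by
      rw [← Finset.sum_neg_distrib]
      exact Finset.sum_congr rfl (fun t _ => by ring)
    rw [e2, hCc i, if_neg hiQ]
    split_ifs with hiK
    · have := hy i hiK; linarith
    · linarith
  have hc0 : ∀ i, c i = 0 := fun i => le_antisymm (hcpos i) (hcneg i)
  constructor
  · intro i
    have := hc0 i
    simp only [hc, sub_eq_zero] at this
    exact this
  · intro i
    have := hCc i
    have e3 : ∑ t, C i t * c t = 0 := by
      apply Finset.sum_eq_zero
      intro t _
      rw [hc0 t, mul_zero]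
    rw [e3] at this
    linarith [this]

/-- A vector of `σ_{J,K}` whose coefficients vanish outside `P` resp. `Q` lies in `σ_{P,Q}`. -/
lemma mem_sigmaCone_of_support {n : ℕ} (C : Matrix (Fin n) (Fin n) ℝ)
    (J K P Q : Finset (Fin n)) (x y : Fin n → ℝ) (v : Fin n → ℝ)
    (hx : ∀ j ∈ J, 0 ≤ x j) (hy : ∀ k ∈ K, 0 ≤ y k)
    (hxP : ∀ j ∈ J, j ∉ P → x j = 0) (hyQ : ∀ k ∈ K, k ∉ Q → y k = 0)
    (hv : v = (∑ j ∈ J, x j • (-acoroot C j)) + ∑ k ∈ K, y k • (Pi.single k 1 : Fin n → ℝ)) :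
    v ∈ sigmaCone C P Q := by
  refine ⟨fun p => if p ∈ J then x p else 0, fun q => if q ∈ K then y q else 0, ?_, ?_, ?_⟩
  · intro p _
    show 0 ≤ if p ∈ J then x p else 0
    split_ifs with h
    · exact hx p h
    · exact le_refl 0
  · intro q _
    show 0 ≤ if q ∈ K then y q else 0
    split_ifs with h
    · exact hy q h
    · exact le_refl 0
  · rw [hv]
    congr 1
    · have e1 : ∑ p ∈ P, (if p ∈ J then x p else 0) • (-acoroot C p)
          = ∑ p ∈ P ∩ J, x p • (-acoroot C p) := by
        rw [← Finset.sum_ite_mem P J (fun p => x p • (-acoroot C p))]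
        exact Finset.sum_congr rfl (fun p _ => by split_ifs with h <;> simp [h])
      have e2 : ∑ j ∈ J, x j • (-acoroot C j)
          = ∑ j ∈ J ∩ P, x j • (-acoroot C j) := by
        symm
        apply Finset.sum_subset Finset.inter_subset_left
        intro j hj hj'
        have hjP : j ∉ P := fun h => hj' (Finset.mem_inter.mpr ⟨hj, h⟩)
        rw [hxP j hj hjP, zero_smul]
      rw [e2, e1, Finset.inter_comm]
    · have e1 : ∑ q ∈ Q, (if q ∈ K then y q else 0) • (Pi.single q 1 : Fin n → ℝ)
          = ∑ q ∈ Q ∩ K, y q • (Pi.single q 1 : Fin n → ℝ) := by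
        rw [← Finset.sum_ite_mem Q K (fun q => y q • (Pi.single q 1 : Fin n → ℝ))]
        exact Finset.sum_congr rfl (fun q _ => by split_ifs with h <;> simp [h])
      have e2 : ∑ k ∈ K, y k • (Pi.single k 1 : Fin n → ℝ)
          = ∑ k ∈ K ∩ Q, y k • (Pi.single k 1 : Fin n → ℝ) := by
        symm
        apply Finset.sum_subset Finset.inter_subset_left
        intro k hk hk'
        have hkQ : k ∉ Q := fun h => hk' (Finset.mem_inter.mpr ⟨hk, h⟩)
        rw [hyQ k hk hkQ, zero_smul]
      rw [e2, e1, Finset.inter_comm]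

theorem stmt_4
    (n : ℕ) (hn : 1 ≤ n) (C : Matrix (Fin n) (Fin n) ℝ)
    (hdiag : ∀ i, C i i = 2)
    (hoff : ∀ i j, i ≠ j → C i j ≤ 0)
    (hprin : ∀ S : Finset (Fin n), S.Nonempty →
      IsUnit (C.submatrix (fun a : S => (a : Fin n)) (fun a : S => (a : Fin n))) ∧
      ∀ i j : S,
        0 ≤ (C.submatrix (fun a : S => (a : Fin n)) (fun a : S => (a : Fin n)))⁻¹ i j)
    (J K : Finset (Fin n)) (hJK : Disjoint J K)
    (P Q : Finset (Fin n)) (hPQ : Disjoint P Q) :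
    IsExtreme ℝ (sigmaCone C J K) (sigmaCone C J K ∩ sigmaCone C P Q) := by
  constructor
  · exact Set.inter_subset_left
  intro v1 hv1 v2 hv2 z hz hseg
  obtain ⟨hzJK, hzPQ⟩ := hz
  obtain ⟨x1, y1, hx1, hy1, hv1eq⟩ := hv1
  obtain ⟨x2, y2, hx2, hy2, hv2eq⟩ := hv2
  obtain ⟨u, w, hu, hw, hzeq⟩ := hzPQ
  obtain ⟨a, b, ha, hb, hab, hz'⟩ := hseg
  -- z as a nonneg combination for (J, K)
  have hrep : (∑ j ∈ J, (a * x1 j + b * x2 j) • (-acoroot C j))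
      + ∑ k ∈ K, (a * y1 k + b * y2 k) • (Pi.single k 1 : Fin n → ℝ) = z := by
    rw [← hz', hv1eq, hv2eq, smul_add, smul_add, Finset.smul_sum, Finset.smul_sum,
      Finset.smul_sum, Finset.smul_sum]
    have eJ : ∀ j ∈ J, (a * x1 j + b * x2 j) • (-acoroot C j)
        = a • (x1 j • (-acoroot C j)) + b • (x2 j • (-acoroot C j)) :=
      fun j _ => by rw [add_smul, smul_smul, smul_smul]
    have eK : ∀ k ∈ K, (a * y1 k + b * y2 k) • (Pi.single k 1 : Fin n → ℝ)
        = a • (y1 k • (Pi.single k 1 : Fin n → ℝ)) + b • (y2 k • (Pi.single k 1 : Fin n → ℝ)) :=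
      fun k _ => by rw [add_smul, smul_smul, smul_smul]
    rw [Finset.sum_congr rfl eJ, Finset.sum_congr rfl eK, Finset.sum_add_distrib,
      Finset.sum_add_distrib]
    abel
  have key := keyLemma C hoff hprin J K P Q hJK hPQ
    (fun j => a * x1 j + b * x2 j) (fun k => a * y1 k + b * y2 k) u w
    (fun j hj => by
      show 0 ≤ a * x1 j + b * x2 j
      nlinarith [hx1 j hj, hx2 j hj])
    (fun k hk => by
      show 0 ≤ a * y1 k + b * y2 k
      nlinarith [hy1 k hk, hy2 k hk])
    hu hw (hrep.trans hzeq)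
  -- coefficients of z outside P (resp. Q) vanish; hence so do those of v1, v2
  have hxz : ∀ j ∈ J, j ∉ P → x1 j = 0 ∧ x2 j = 0 := by
    intro j hj hjP
    have h1 := key.1 j
    rw [if_pos hj, if_neg hjP] at h1
    have h1' : a * x1 j + b * x2 j = 0 := h1
    constructor <;> nlinarith [hx1 j hj, hx2 j hj]
  have hyz : ∀ k ∈ K, k ∉ Q → y1 k = 0 ∧ y2 k = 0 := by
    intro k hk hkQ
    have h1 := key.2 k
    rw [if_pos hk, if_neg hkQ] at h1
    have h1' : a * y1 k + b * y2 k = 0 := h1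
    constructor <;> nlinarith [hy1 k hk, hy2 k hk]
  · exact ⟨⟨x1, y1, hx1, hy1, hv1eq⟩,
      mem_sigmaCone_of_support C J K P Q x1 y1 v1 hx1 hy1
        (fun j hj hjP => (hxz j hj hjP).1) (fun k hk hkQ => (hyz k hk hkQ).1) hv1eq⟩
end

section
/- For every pair of disjoint subsets J, K ⊆ I one has σ_{J,K} ⊆ σ_J := σ_{J, I−J}; moreover for any two distinct subsets J, J′ ⊆ I, the cone σ_J is not contained in σ_{J′}. In particular the maximal cones of the collection Σ = {σ_{J,K} : J, K ⊆ I, J ∩ K = ∅} under inclusion are precisely the cones σ_J for J ⊆ I. -/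
open Matrix

/-!
Enlarging `K` enlarges `σ_{J,K}`, so every cone lies in some `σ_J`, and it remains to see that
`σ_J ⊄ σ_{J'}` for `J ≠ J'` by exhibiting a generator of `σ_J` outside `σ_{J'}`. If `j ∈ J \ J'`,
the `j`-th coordinate of `-α^∨_j` is `-2`, while every point of `σ_{J'}` has nonnegative `j`-th
coordinate since `C_{ji} ≤ 0` for `i ∈ J'`. If `k ∈ J' \ J`, restricting `e_k ∈ σ_{J'}` to the
coordinates in `J'` gives `e_k = -C_{J'} x` with `x ≥ 0`, so `x_k = -(C_{J'}⁻¹)_{kk}`, which is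
negative: `(C_{J'}⁻¹ C_{J'})_{kk} = 1` is a sum whose off-diagonal terms are `≤ 0`.
-/

open Finset

theorem Matrix.diag_pos_of_mul_eq_one {ι : Type*} [Fintype ι] [DecidableEq ι]
    {M N : Matrix ι ι ℝ} (hNM : N * M = 1) (hN : ∀ i j, 0 ≤ N i j)
    (hM : ∀ i j, i ≠ j → M i j ≤ 0) (i : ι) : 0 < N i i := by
  have hsum : N i i * M i i + ∑ j ∈ univ.erase i, N i j * M j i = 1 := by
    rw [add_sum_erase _ (fun j => N i j * M j i) (mem_univ i), ← mul_apply, hNM, one_apply_eq]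
  have hrest : ∑ j ∈ univ.erase i, N i j * M j i ≤ 0 :=
    sum_nonpos fun j hj => mul_nonpos_of_nonneg_of_nonpos (hN i j) (hM j i (ne_of_mem_erase hj))
  refine (hN i i).lt_of_ne fun h => ?_
  rw [← h, zero_mul] at hsum
  linarith

section

variable {n : ℕ} {C : Matrix (Fin n) (Fin n) ℝ}

theorem coneCombination_apply (J K : Finset (Fin n)) (x y : Fin n → ℝ) (i : Fin n) :
    ((∑ j ∈ J, x j • -acoroot C j) + ∑ k ∈ K, y k • (Pi.single k 1 : Fin n → ℝ)) i
      = -∑ j ∈ J, x j * C i j + if i ∈ K then y i else 0 := by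
  simp [Finset.sum_apply, acoroot, Pi.single_apply, mul_ite, sum_ite_eq]

theorem sigmaCone_mono_right {J K K' : Finset (Fin n)} (h : K ⊆ K') :
    sigmaCone C J K ⊆ sigmaCone C J K' := by
  rintro v ⟨x, y, hx, hy, rfl⟩
  refine ⟨x, fun k => if k ∈ K then y k else 0, hx, fun k _ => ?_, ?_⟩
  · dsimp only
    split_ifs with hk
    exacts [hy k hk, le_rfl]
  · simp only [ite_smul, zero_smul, sum_ite_mem, inter_eq_right.2 h]

theorem sigmaCone_subset_sigmaCone_compl {J K : Finset (Fin n)} (h : Disjoint J K) :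
    sigmaCone C J K ⊆ sigmaCone C J Jᶜ :=
  sigmaCone_mono_right (subset_compl_iff_disjoint_left.2 h)

theorem single_mem_sigmaCone {J K : Finset (Fin n)} {k : Fin n} (hk : k ∈ K) :
    (Pi.single k 1 : Fin n → ℝ) ∈ sigmaCone C J K := by
  refine ⟨0, Pi.single k 1, by simp, fun l _ => ?_, ?_⟩
  · by_cases h : l = k <;> simp [h]
  · simp [Pi.single_apply, ite_smul, hk]

theorem neg_acoroot_mem_sigmaCone {J K : Finset (Fin n)} {j : Fin n} (hj : j ∈ J) :
    -acoroot C j ∈ sigmaCone C J K := by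
  refine ⟨Pi.single j 1, 0, fun l _ => ?_, by simp, ?_⟩
  · by_cases h : l = j <;> simp [h]
  · simp [Pi.single_apply, ite_smul, hj]

theorem nonneg_apply_of_mem_sigmaCone (hoff : ∀ i j, i ≠ j → C i j ≤ 0) {J K : Finset (Fin n)}
    {v : Fin n → ℝ} (hv : v ∈ sigmaCone C J K) {i : Fin n} (hi : i ∉ J) : 0 ≤ v i := by
  obtain ⟨x, y, hx, hy, rfl⟩ := hv
  rw [coneCombination_apply]
  have hJ : ∑ j ∈ J, x j * C i j ≤ 0 :=
    sum_nonpos fun j hj =>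
      mul_nonpos_of_nonneg_of_nonpos (hx j hj) (hoff i j (ne_of_mem_of_not_mem hj hi).symm)
  have hK : 0 ≤ if i ∈ K then y i else 0 := by
    split_ifs with h
    exacts [hy i h, le_rfl]
  linarith

theorem neg_acoroot_notMem_sigmaCone (hoff : ∀ i j, i ≠ j → C i j ≤ 0) {J K : Finset (Fin n)}
    {j : Fin n} (hj : j ∉ J) (hCj : 0 < C j j) : -acoroot C j ∉ sigmaCone C J K := fun h => by
  have := nonneg_apply_of_mem_sigmaCone hoff h hj
  simp only [Pi.neg_apply, acoroot, neg_nonneg] at this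
  linarith

theorem single_notMem_sigmaCone {J K : Finset (Fin n)} (hJK : Disjoint J K)
    {N : Matrix J J ℝ} (hNC : N * C.submatrix (↑) (↑) = 1)
    {k : Fin n} (hk : k ∈ J) (hkk : 0 < N ⟨k, hk⟩ ⟨k, hk⟩) :
    (Pi.single k 1 : Fin n → ℝ) ∉ sigmaCone C J K := by
  rintro ⟨x, y, hx, -, heq⟩
  set ξ : J → ℝ := fun j => x j
  have hcoord : (Pi.single ⟨k, hk⟩ 1 : J → ℝ) = -(C.submatrix (↑) (↑) *ᵥ ξ) := by
    ext i
    have := congrFun heq i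
    rw [coneCombination_apply, if_neg (disjoint_left.1 hJK i.2), add_zero] at this
    simpa [mulVec, dotProduct, Pi.single_apply, Subtype.ext_iff, mul_comm, ← sum_coe_sort J]
      using this
  have hNkk : N ⟨k, hk⟩ ⟨k, hk⟩ = -x k := by
    simpa [mulVec_neg, mulVec_mulVec, hNC, ξ] using congrFun (congrArg (N *ᵥ ·) hcoord) ⟨k, hk⟩
  linarith [hx k hk]

theorem not_sigmaCone_compl_subset (hdiag : ∀ i, C i i = 2) (hoff : ∀ i j, i ≠ j → C i j ≤ 0)
    (hprin : ∀ S : Finset (Fin n), S.Nonempty →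
      IsUnit (C.submatrix (fun a : S => (a : Fin n)) (fun a : S => (a : Fin n))) ∧
      ∀ i j : S,
        0 ≤ (C.submatrix (fun a : S => (a : Fin n)) (fun a : S => (a : Fin n)))⁻¹ i j)
    {J J' : Finset (Fin n)} (hne : J ≠ J') : ¬sigmaCone C J Jᶜ ⊆ sigmaCone C J' J'ᶜ := by
  intro hsub
  by_cases hJ : J ⊆ J'
  · obtain ⟨k, hkJ', hkJ⟩ := not_subset.1 fun h => hne (hJ.antisymm h)
    obtain ⟨hu, hinv⟩ := hprin J' ⟨k, hkJ'⟩
    have hinv_mul := nonsing_inv_mul _ ((isUnit_iff_isUnit_det _).1 hu)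
    have hpos := diag_pos_of_mul_eq_one hinv_mul hinv
      (fun i j hij => hoff i j (Subtype.coe_ne_coe.2 hij)) ⟨k, hkJ'⟩
    exact single_notMem_sigmaCone disjoint_compl_right hinv_mul hkJ' hpos
      (hsub (single_mem_sigmaCone (mem_compl.2 hkJ)))
  · obtain ⟨j, hjJ, hjJ'⟩ := not_subset.1 hJ
    exact neg_acoroot_notMem_sigmaCone hoff hjJ' (by rw [hdiag]; norm_num)
      (hsub (neg_acoroot_mem_sigmaCone hjJ))

end

theorem stmt_5_general
    (n : ℕ) (C : Matrix (Fin n) (Fin n) ℝ)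
    (hdiag : ∀ i, C i i = 2)
    (hoff : ∀ i j, i ≠ j → C i j ≤ 0)
    (hprin : ∀ S : Finset (Fin n), S.Nonempty →
      IsUnit (C.submatrix (fun a : S => (a : Fin n)) (fun a : S => (a : Fin n))) ∧
      ∀ i j : S,
        0 ≤ (C.submatrix (fun a : S => (a : Fin n)) (fun a : S => (a : Fin n)))⁻¹ i j) :
    (∀ J K : Finset (Fin n), Disjoint J K → sigmaCone C J K ⊆ sigmaCone C J Jᶜ) ∧
    (∀ J J' : Finset (Fin n), J ≠ J' → ¬ sigmaCone C J Jᶜ ⊆ sigmaCone C J' J'ᶜ) ∧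
    {s : Set (Fin n → ℝ) |
        (∃ J K : Finset (Fin n), Disjoint J K ∧ s = sigmaCone C J K) ∧
        ∀ t : Set (Fin n → ℝ),
          (∃ J K : Finset (Fin n), Disjoint J K ∧ t = sigmaCone C J K) → s ⊆ t → s = t}
      = {s : Set (Fin n → ℝ) | ∃ J : Finset (Fin n), s = sigmaCone C J Jᶜ} := by
  have hsub : ∀ J K : Finset (Fin n), Disjoint J K → sigmaCone C J K ⊆ sigmaCone C J Jᶜ :=
    fun _ _ => sigmaCone_subset_sigmaCone_compl
  have hincomparable :
      ∀ J J' : Finset (Fin n), J ≠ J' → ¬sigmaCone C J Jᶜ ⊆ sigmaCone C J' J'ᶜ :=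
    fun _ _ => not_sigmaCone_compl_subset hdiag hoff hprin
  refine ⟨hsub, hincomparable, Set.ext fun s => ⟨?_, ?_⟩⟩
  · rintro ⟨⟨J, K, hJK, rfl⟩, hmax⟩
    exact ⟨J, hmax _ ⟨J, Jᶜ, disjoint_compl_right, rfl⟩ (hsub J K hJK)⟩
  · rintro ⟨J, rfl⟩
    refine ⟨⟨J, Jᶜ, disjoint_compl_right, rfl⟩, ?_⟩
    rintro _ ⟨J', K', hJK', rfl⟩ hle
    obtain rfl | hne := eq_or_ne J J'
    · exact hle.antisymm (hsub J K' hJK')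
    · exact absurd (hle.trans (hsub J' K' hJK')) (hincomparable J J' hne)

theorem stmt_5
    (n : ℕ) (hn : 1 ≤ n) (C : Matrix (Fin n) (Fin n) ℝ)
    (hdiag : ∀ i, C i i = 2)
    (hoff : ∀ i j, i ≠ j → C i j ≤ 0)
    (hprin : ∀ S : Finset (Fin n), S.Nonempty →
      IsUnit (C.submatrix (fun a : S => (a : Fin n)) (fun a : S => (a : Fin n))) ∧
      ∀ i j : S,
        0 ≤ (C.submatrix (fun a : S => (a : Fin n)) (fun a : S => (a : Fin n)))⁻¹ i j) :
    (∀ J K : Finset (Fin n), Disjoint J K → sigmaCone C J K ⊆ sigmaCone C J Jᶜ) ∧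
    (∀ J J' : Finset (Fin n), J ≠ J' → ¬ sigmaCone C J Jᶜ ⊆ sigmaCone C J' J'ᶜ) ∧
    {s : Set (Fin n → ℝ) |
        (∃ J K : Finset (Fin n), Disjoint J K ∧ s = sigmaCone C J K) ∧
        ∀ t : Set (Fin n → ℝ),
          (∃ J K : Finset (Fin n), Disjoint J K ∧ t = sigmaCone C J K) → s ⊆ t → s = t}
      = {s : Set (Fin n → ℝ) | ∃ J : Finset (Fin n), s = sigmaCone C J Jᶜ} :=
  stmt_5_general n C hdiag hoff hprin
end

section
/- For any two subsets J, J′ ⊆ I, the real linear span of the intersection σ_J ∩ σ_{J′} has dimension |J ∩ J′| + n − |J ∪ J′|. -/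
open Matrix

lemma sigmaCone_coord {n : ℕ} (C : Matrix (Fin n) (Fin n) ℝ) {J K : Finset (Fin n)}
    {v : Fin n → ℝ} (h : v ∈ sigmaCone C J K) :
    ∃ x y : Fin n → ℝ, (∀ j ∈ J, 0 ≤ x j) ∧ (∀ k ∈ K, 0 ≤ y k) ∧
      (v = (∑ j ∈ J, x j • (-acoroot C j)) + ∑ k ∈ K, y k • (Pi.single k 1 : Fin n → ℝ)) ∧
      ∀ i, v i = -(∑ j ∈ J, C i j * x j) + (if i ∈ K then y i else 0) := by
  obtain ⟨x, y, hx, hy, rfl⟩ := h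
  refine ⟨x, y, hx, hy, rfl, fun i => ?_⟩
  simp only [Pi.add_apply, Finset.sum_apply, Pi.smul_apply, Pi.neg_apply, smul_eq_mul,
    Pi.single_apply, acoroot, mul_ite, mul_one, mul_zero]
  rw [Finset.sum_ite_eq, ← Finset.sum_neg_distrib]
  congr 1
  exact Finset.sum_congr rfl fun j _ => by ring

lemma subT_zero {n : ℕ} (C : Matrix (Fin n) (Fin n) ℝ)
    (hprin : ∀ S : Finset (Fin n), S.Nonempty →
      IsUnit (C.submatrix (fun a : S => (a : Fin n)) (fun a : S => (a : Fin n))) ∧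
      ∀ i j : S,
        0 ≤ (C.submatrix (fun a : S => (a : Fin n)) (fun a : S => (a : Fin n)))⁻¹ i j)
    (T : Finset (Fin n)) (a : Fin n → ℝ)
    (h : ∀ i ∈ T, ∑ j ∈ T, C i j * a j = 0) : ∀ j ∈ T, a j = 0 := by
  intro j hj
  obtain ⟨hu, -⟩ := hprin T ⟨j, hj⟩
  set M := C.submatrix (fun a : T => (a : Fin n)) (fun a : T => (a : Fin n)) with hM
  have hNM : M⁻¹ * M = 1 := Matrix.nonsing_inv_mul M ((Matrix.isUnit_iff_isUnit_det M).mp hu)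
  have h0 : M *ᵥ (fun t : T => a t) = 0 := by
    funext i
    have := h i i.2
    rw [← Finset.sum_coe_sort T (fun j => C (i : Fin n) j * a j)] at this
    simpa [Matrix.mulVec, dotProduct, hM] using this
  have : (fun t : T => a t) = 0 := by
    have := congrArg (fun w => M⁻¹ *ᵥ w) h0
    simpa [Matrix.mulVec_mulVec, hNM] using this
  exact congrFun this ⟨j, hj⟩

lemma kill {n : ℕ} (C : Matrix (Fin n) (Fin n) ℝ)
    (hoff : ∀ i j, i ≠ j → C i j ≤ 0)
    (hprin : ∀ S : Finset (Fin n), S.Nonempty →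
      IsUnit (C.submatrix (fun a : S => (a : Fin n)) (fun a : S => (a : Fin n))) ∧
      ∀ i j : S,
        0 ≤ (C.submatrix (fun a : S => (a : Fin n)) (fun a : S => (a : Fin n)))⁻¹ i j)
    (J J' : Finset (Fin n)) (x y x' y' : Fin n → ℝ)
    (hx : ∀ j ∈ J, 0 ≤ x j) (hy : ∀ k ∈ Jᶜ, 0 ≤ y k)
    (hx' : ∀ j ∈ J', 0 ≤ x' j) (hy' : ∀ k ∈ J'ᶜ, 0 ≤ y' k)
    (heq : ∀ i, -(∑ j ∈ J, C i j * x j) + (if i ∈ Jᶜ then y i else 0)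
             = -(∑ j ∈ J', C i j * x' j) + (if i ∈ J'ᶜ then y' i else 0)) :
    ∀ j ∈ J \ J', x j = 0 := by
  rcases J.eq_empty_or_nonempty with hJ | hJ
  · intro j hj; rw [hJ] at hj; simp at hj
  obtain ⟨hu, hN⟩ := hprin J hJ
  set M := C.submatrix (fun a : J => (a : Fin n)) (fun a : J => (a : Fin n)) with hMdef
  have hNM : M⁻¹ * M = 1 := Matrix.nonsing_inv_mul M ((Matrix.isUnit_iff_isUnit_det M).mp hu)
  set c : Fin n → ℝ := fun i =>
    if h : i ∈ J then ∑ a : J, (if (a : Fin n) ∈ J \ J' then M⁻¹ a ⟨i, h⟩ else 0) else 0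
    with hcdef
  have hc0 : ∀ i, 0 ≤ c i := by
    intro i
    rw [hcdef]
    dsimp only
    split
    · exact Finset.sum_nonneg fun a _ => by split; exacts [hN _ _, le_rfl]
    · exact le_rfl
  have hcol : ∀ j, (hj : j ∈ J) → ∑ i, c i * C i j = if j ∈ J \ J' then 1 else 0 := by
    intro j hj
    have h1 : ∑ i, c i * C i j = ∑ i ∈ J, c i * C i j := by
      symm
      apply Finset.sum_subset (Finset.subset_univ J)
      intro i _ hi
      rw [hcdef]; simp [hi]
    rw [h1, ← Finset.sum_coe_sort J (fun i => c i * C i j)]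
    have h2 : ∀ i : J, c (i : Fin n) * C (i : Fin n) j
        = ∑ a : J, (if (a : Fin n) ∈ J \ J' then M⁻¹ a i * M i ⟨j, hj⟩ else 0) := by
      intro i
      rw [hcdef]
      simp only [i.2, dif_pos, Subtype.coe_eta, Finset.sum_mul, ite_mul, zero_mul]
      rfl
    rw [Finset.sum_congr rfl fun i _ => h2 i, Finset.sum_comm]
    have h3 : ∀ a : J, (∑ i : J, if (a : Fin n) ∈ J \ J' then M⁻¹ a i * M i ⟨j, hj⟩ else 0)
        = if (a : Fin n) ∈ J \ J' then (1 : Matrix J J ℝ) a ⟨j, hj⟩ else 0 := by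
      intro a
      split
      · rw [← hNM, Matrix.mul_apply]
      · simp
    rw [Finset.sum_congr rfl fun a _ => h3 a]
    rw [Finset.sum_eq_single (⟨j, hj⟩ : J)]
    · simp [Matrix.one_apply]
    · intro b _ hb
      simp [Matrix.one_apply, hb]
    · intro h; exact absurd (Finset.mem_univ _) h
  have hcol' : ∀ j, j ∉ J → ∑ i, c i * C i j ≤ 0 := by
    intro j hj
    apply Finset.sum_nonpos
    intro i _
    by_cases hi : i ∈ J
    · exact mul_nonpos_of_nonneg_of_nonpos (hc0 i)
        (hoff i j (fun h => hj (h ▸ hi)))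
    · rw [hcdef]; simp [hi]
  have hsum : ∑ i, c i * (-(∑ j ∈ J, C i j * x j) + (if i ∈ Jᶜ then y i else 0))
      = ∑ i, c i * (-(∑ j ∈ J', C i j * x' j) + (if i ∈ J'ᶜ then y' i else 0)) :=
    Finset.sum_congr rfl fun i _ => by rw [heq i]
  have expand : ∀ (K : Finset (Fin n)) (z w : Fin n → ℝ),
      ∑ i, c i * (-(∑ j ∈ K, C i j * z j) + (if i ∈ Kᶜ then w i else 0))
      = -(∑ j ∈ K, (∑ i, c i * C i j) * z j) + ∑ i ∈ Kᶜ, c i * w i := by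
    intro K z w
    have e1 : ∀ i : Fin n, c i * (-(∑ j ∈ K, C i j * z j) + (if i ∈ Kᶜ then w i else 0))
        = -(∑ j ∈ K, c i * C i j * z j) + (if i ∈ Kᶜ then c i * w i else 0) := by
      intro i
      rw [mul_add, mul_neg, Finset.mul_sum, mul_ite, mul_zero]
      congr 2
      exact Finset.sum_congr rfl fun j _ => by ring
    rw [Finset.sum_congr rfl fun i _ => e1 i, Finset.sum_add_distrib]
    congr 1
    · calc ∑ i : Fin n, -∑ j ∈ K, c i * C i j * z j
          = -∑ i : Fin n, ∑ j ∈ K, c i * C i j * z j := by rw [Finset.sum_neg_distrib]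
        _ = -∑ j ∈ K, ∑ i : Fin n, c i * C i j * z j := by rw [Finset.sum_comm]
        _ = -∑ j ∈ K, (∑ i : Fin n, c i * C i j) * z j := by
            congr 1
            refine Finset.sum_congr rfl fun j _ => ?_
            rw [Finset.sum_mul]
    · rw [Finset.sum_ite_mem, Finset.univ_inter]
  rw [expand J x y, expand J' x' y'] at hsum
  have hy0 : ∑ i ∈ Jᶜ, c i * y i = 0 := by
    apply Finset.sum_eq_zero
    intro i hi
    rw [hcdef]
    simp [Finset.mem_compl.mp hi]
  have hX : ∑ j ∈ J, (∑ i, c i * C i j) * x j = ∑ j ∈ J \ J', x j := by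
    rw [Finset.sum_congr rfl fun j hj => by rw [hcol j hj]]
    simp only [ite_mul, one_mul, zero_mul]
    rw [Finset.sum_ite_mem, Finset.inter_eq_right.mpr (Finset.sdiff_subset)]
  have hR1 : ∑ j ∈ J', (∑ i, c i * C i j) * x' j ≤ 0 := by
    apply Finset.sum_nonpos
    intro j hj
    by_cases hjJ : j ∈ J
    · rw [hcol j hjJ, if_neg (by simp [hj])]
      simp
    · exact mul_nonpos_of_nonpos_of_nonneg (hcol' j hjJ) (hx' j hj)
  have hR2 : 0 ≤ ∑ i ∈ J'ᶜ, c i * y' i :=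
    Finset.sum_nonneg fun i hi => mul_nonneg (hc0 i) (hy' i hi)
  rw [hX, hy0, add_zero] at hsum
  have hle : ∑ j ∈ J \ J', x j ≤ 0 := by
    have : (0:ℝ) ≤ -(∑ j ∈ J', (∑ i, c i * C i j) * x' j) + ∑ i ∈ J'ᶜ, c i * y' i := by
      have := neg_nonneg.mpr hR1
      linarith
    linarith [hsum, this]
  have hnn : ∀ j ∈ J \ J', 0 ≤ x j := fun j hj => hx j (Finset.sdiff_subset hj)
  exact (Finset.sum_eq_zero_iff_of_nonneg hnn).mp
    (le_antisymm hle (Finset.sum_nonneg hnn))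

lemma neg_acoroot_mem {n : ℕ} (C : Matrix (Fin n) (Fin n) ℝ) {J K : Finset (Fin n)}
    {j : Fin n} (hj : j ∈ J) : -acoroot C j ∈ sigmaCone C J K := by
  refine ⟨fun j' => if j' = j then 1 else 0, 0, fun j' _ => by positivity, fun k _ => le_rfl, ?_⟩
  simp [ite_smul, Finset.sum_ite_eq', hj]

lemma single_mem {n : ℕ} (C : Matrix (Fin n) (Fin n) ℝ) {J K : Finset (Fin n)}
    {k : Fin n} (hk : k ∈ K) : (Pi.single k 1 : Fin n → ℝ) ∈ sigmaCone C J K := by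
  refine ⟨0, fun k' => if k' = k then 1 else 0, fun j _ => le_rfl, fun k' _ => by positivity, ?_⟩
  simp [ite_smul, Finset.sum_ite_eq', hk]

lemma indep {n : ℕ} (C : Matrix (Fin n) (Fin n) ℝ)
    (hprin : ∀ S : Finset (Fin n), S.Nonempty →
      IsUnit (C.submatrix (fun a : S => (a : Fin n)) (fun a : S => (a : Fin n))) ∧
      ∀ i j : S,
        0 ≤ (C.submatrix (fun a : S => (a : Fin n)) (fun a : S => (a : Fin n)))⁻¹ i j)
    (T S : Finset (Fin n)) (hTS : T ⊆ S) :
    LinearIndependent ℝ (Sum.elim (fun j : ↥T => -acoroot C (j : Fin n))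
      (fun k : ↥(Sᶜ) => (Pi.single (k : Fin n) 1 : Fin n → ℝ))) := by
  rw [Fintype.linearIndependent_iff]
  intro g hg
  set a : Fin n → ℝ := fun j => if h : j ∈ T then g (Sum.inl ⟨j, h⟩) else 0 with ha
  have h0 : ∀ i : Fin n, (∑ j : ↥T, g (Sum.inl j) * (-(C i (j : Fin n))))
      + ∑ k : ↥(Sᶜ), g (Sum.inr k) * (if i = (k : Fin n) then 1 else 0) = 0 := by
    intro i
    have := congrFun hg i
    simpa [Fintype.sum_sum_type, Finset.sum_apply, acoroot, Pi.single_apply] using this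
  have hgl : ∀ j ∈ T, a j = 0 := by
    apply subT_zero C hprin
    intro i hi
    have e := h0 i
    have e2 : ∑ k : ↥(Sᶜ), g (Sum.inr k) * (if i = (k : Fin n) then 1 else 0) = 0 := by
      apply Finset.sum_eq_zero
      intro k _
      rw [if_neg, mul_zero]
      intro hik
      exact absurd (hTS hi) (by rw [hik]; exact Finset.mem_compl.mp k.2)
    rw [e2, add_zero] at e
    have e3 : ∑ j : ↥T, g (Sum.inl j) * (-(C i (j : Fin n)))
        = -∑ j ∈ T, C i j * a j := by
      rw [← Finset.sum_neg_distrib, ← Finset.sum_coe_sort T (fun j => -(C i j * a j))]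
      refine Finset.sum_congr rfl fun j _ => ?_
      rw [ha]
      simp only [j.2, dif_pos, Subtype.coe_eta]
      ring
    rw [e3, neg_eq_zero] at e
    exact e
  have hgl' : ∀ j : ↥T, g (Sum.inl j) = 0 := by
    intro j
    have := hgl (j : Fin n) j.2
    rw [ha] at this
    simpa [j.2, Subtype.coe_eta] using this
  have hgr : ∀ k : ↥(Sᶜ), g (Sum.inr k) = 0 := by
    intro k0
    have e := h0 (k0 : Fin n)
    rw [Finset.sum_eq_zero (fun j _ => by rw [hgl', zero_mul]), zero_add] at e
    rw [Finset.sum_eq_single k0] at e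
    · simpa using e
    · intro b _ hb
      rw [if_neg (fun h => hb (Subtype.ext h.symm)), mul_zero]
    · intro h; exact absurd (Finset.mem_univ _) h
  intro u
  cases u with
  | inl j => exact hgl' j
  | inr k => exact hgr k

theorem stmt_6
    (n : ℕ) (hn : 1 ≤ n) (C : Matrix (Fin n) (Fin n) ℝ)
    (hdiag : ∀ i, C i i = 2)
    (hoff : ∀ i j, i ≠ j → C i j ≤ 0)
    (hprin : ∀ S : Finset (Fin n), S.Nonempty →
      IsUnit (C.submatrix (fun a : S => (a : Fin n)) (fun a : S => (a : Fin n))) ∧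
      ∀ i j : S,
        0 ≤ (C.submatrix (fun a : S => (a : Fin n)) (fun a : S => (a : Fin n)))⁻¹ i j)
    (J J' : Finset (Fin n)) :
    Module.finrank ℝ
        (Submodule.span ℝ (sigmaCone C J Jᶜ ∩ sigmaCone C J' J'ᶜ))
      = (J ∩ J').card + (n - (J ∪ J').card) := by
  classical
  have hspan : Submodule.span ℝ (sigmaCone C J Jᶜ ∩ sigmaCone C J' J'ᶜ)
      = Submodule.span ℝ (Set.range (Sum.elim (fun j : ↥(J ∩ J') => -acoroot C (j : Fin n))
        (fun k : ↥((J ∪ J')ᶜ) => (Pi.single (k : Fin n) 1 : Fin n → ℝ)))) := by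
    apply le_antisymm
    · rw [Submodule.span_le]
      rintro v ⟨hv1, hv2⟩
      obtain ⟨x, y, hx, hy, hveq, hvc⟩ := sigmaCone_coord C hv1
      obtain ⟨x', y', hx', hy', hveq', hvc'⟩ := sigmaCone_coord C hv2
      have heq : ∀ i, -(∑ j ∈ J, C i j * x j) + (if i ∈ Jᶜ then y i else 0)
          = -(∑ j ∈ J', C i j * x' j) + (if i ∈ J'ᶜ then y' i else 0) := fun i => by
        rw [← hvc i, ← hvc' i]
      have hxA : ∀ j ∈ J \ J', x j = 0 :=
        kill C hoff hprin J J' x y x' y' hx hy hx' hy' heq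
      have hxB : ∀ j ∈ J' \ J, x' j = 0 :=
        kill C hoff hprin J' J x' y' x y hx' hy' hx hy (fun i => (heq i).symm)
      have e1 : ∀ i : Fin n, ∑ j ∈ J, C i j * x j = ∑ j ∈ J ∩ J', C i j * x j := by
        intro i
        symm
        apply Finset.sum_subset Finset.inter_subset_left
        intro j hjJ hjT
        rw [hxA j (Finset.mem_sdiff.mpr
          ⟨hjJ, fun hj' => hjT (Finset.mem_inter.mpr ⟨hjJ, hj'⟩)⟩), mul_zero]
      have e2 : ∀ i : Fin n, ∑ j ∈ J', C i j * x' j = ∑ j ∈ J ∩ J', C i j * x' j := by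
        intro i
        symm
        apply Finset.sum_subset Finset.inter_subset_right
        intro j hjJ' hjT
        rw [hxB j (Finset.mem_sdiff.mpr
          ⟨hjJ', fun hj => hjT (Finset.mem_inter.mpr ⟨hj, hjJ'⟩)⟩), mul_zero]
      have hxx' : ∀ j ∈ J ∩ J', x j - x' j = 0 := by
        apply subT_zero C hprin
        intro i hi
        have e := heq i
        rw [if_neg (fun h => (Finset.mem_compl.mp h) (Finset.mem_inter.mp hi).1),
          if_neg (fun h => (Finset.mem_compl.mp h) (Finset.mem_inter.mp hi).2),
          add_zero, add_zero, neg_inj, e1 i, e2 i] at e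
        calc ∑ j ∈ J ∩ J', C i j * (x j - x' j)
            = ∑ j ∈ J ∩ J', (C i j * x j - C i j * x' j) :=
              Finset.sum_congr rfl fun j _ => by ring
          _ = ∑ j ∈ J ∩ J', C i j * x j - ∑ j ∈ J ∩ J', C i j * x' j :=
              Finset.sum_sub_distrib _ _
          _ = 0 := by rw [e, sub_self]
      have hyB : ∀ k ∈ J' \ J, y k = 0 := by
        intro k hk
        obtain ⟨hkJ', hkJ⟩ := Finset.mem_sdiff.mp hk
        have e := heq k
        rw [if_pos (Finset.mem_compl.mpr hkJ),
          if_neg (fun h => (Finset.mem_compl.mp h) hkJ'),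
          add_zero, e1 k, e2 k] at e
        have e4 : y k = ∑ j ∈ J ∩ J', C k j * x j - ∑ j ∈ J ∩ J', C k j * x' j := by
          linarith [e]
        rw [e4, ← Finset.sum_sub_distrib]
        apply Finset.sum_eq_zero
        intro j hj
        have : x j = x' j := by linarith [hxx' j hj]
        rw [this]
        ring
      have hJ2 : J = (J ∩ J') ∪ (J \ J') := by
        ext a; simp only [Finset.mem_union, Finset.mem_inter, Finset.mem_sdiff]; tauto
      have hJc : Jᶜ = (J ∪ J')ᶜ ∪ (J' \ J) := by
        ext a
        simp only [Finset.mem_union, Finset.mem_compl, Finset.mem_sdiff, Finset.mem_union]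
        tauto
      have hd1 : Disjoint (J ∩ J') (J \ J') := by
        rw [Finset.disjoint_left]
        intro a ha hb
        exact (Finset.mem_sdiff.mp hb).2 (Finset.mem_inter.mp ha).2
      have hd2 : Disjoint ((J ∪ J')ᶜ) (J' \ J) := by
        rw [Finset.disjoint_left]
        intro a ha hb
        exact (Finset.mem_compl.mp ha) (Finset.mem_union_right _ (Finset.mem_sdiff.mp hb).1)
      have split1 : ∑ j ∈ J, x j • (-acoroot C j)
          = ∑ j ∈ J ∩ J', x j • (-acoroot C j) + ∑ j ∈ J \ J', x j • (-acoroot C j) := by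
        rw [← Finset.sum_union hd1, ← hJ2]
      have split2 : ∑ k ∈ Jᶜ, y k • (Pi.single k 1 : Fin n → ℝ)
          = ∑ k ∈ (J ∪ J')ᶜ, y k • (Pi.single k 1 : Fin n → ℝ)
            + ∑ k ∈ J' \ J, y k • (Pi.single k 1 : Fin n → ℝ) := by
        rw [← Finset.sum_union hd2, ← hJc]
      have z1 : ∑ j ∈ J \ J', x j • (-acoroot C j) = 0 :=
        Finset.sum_eq_zero fun j hj => by rw [hxA j hj, zero_smul]
      have z2 : ∑ k ∈ J' \ J, y k • (Pi.single k 1 : Fin n → ℝ) = 0 :=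
        Finset.sum_eq_zero fun k hk => by rw [hyB k hk, zero_smul]
      rw [hveq, split1, split2, z1, z2, add_zero, add_zero]
      apply Submodule.add_mem
      · apply Submodule.sum_mem
        intro j hj
        exact Submodule.smul_mem _ _ (Submodule.subset_span ⟨Sum.inl ⟨j, hj⟩, rfl⟩)
      · apply Submodule.sum_mem
        intro k hk
        exact Submodule.smul_mem _ _ (Submodule.subset_span ⟨Sum.inr ⟨k, hk⟩, rfl⟩)
    · rw [Submodule.span_le]
      rintro w ⟨u, rfl⟩
      apply Submodule.subset_span
      cases u with
      | inl j =>
        exact ⟨neg_acoroot_mem C (Finset.mem_inter.mp j.2).1,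
          neg_acoroot_mem C (Finset.mem_inter.mp j.2).2⟩
      | inr k =>
        have hk := Finset.mem_compl.mp k.2
        refine ⟨single_mem C (Finset.mem_compl.mpr fun h => hk (Finset.mem_union_left _ h)),
          single_mem C (Finset.mem_compl.mpr fun h => hk (Finset.mem_union_right _ h))⟩
  rw [hspan, finrank_span_eq_card (indep C hprin (J ∩ J') (J ∪ J') Finset.inter_subset_union)]
  rw [Fintype.card_sum, Fintype.card_coe, Fintype.card_coe, Finset.card_compl,
    Fintype.card_fin]
end

section
/- Let J, K ⊆ I be disjoint with |J| + |K| = n − 1, and let ℓ be the unique element of I − (J ∪ K). Then σ_{J,K} is contained in the two cones σ_{J∪{ℓ}} = σ_{J∪{ℓ}, K} and σ_J = σ_{J, K∪{ℓ}}, these two cones are distinct, and each of them is full-dimensional (its linear span is all of ℝ^n). -/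
open Matrix

lemma sigmaCone_mono {n : ℕ} (C : Matrix (Fin n) (Fin n) ℝ) {J J' K K' : Finset (Fin n)}
    (hJ : J ⊆ J') (hK : K ⊆ K') : sigmaCone C J K ⊆ sigmaCone C J' K' := by
  rintro v ⟨x, y, hx, hy, rfl⟩
  refine ⟨fun j => if j ∈ J then x j else 0, fun k => if k ∈ K then y k else 0,
    fun j _ => by by_cases h : j ∈ J
                  · simpa [h] using hx j h
                  · simp [h],
    fun k _ => by by_cases h : k ∈ K
                  · simpa [h] using hy k h
                  · simp [h], ?_⟩
  congr 1
  · rw [← Finset.sum_subset hJ (fun j _ hj => by simp [hj])]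
    exact Finset.sum_congr rfl fun j hj => by simp [hj]
  · rw [← Finset.sum_subset hK (fun k _ hk => by simp [hk])]
    exact Finset.sum_congr rfl fun k hk => by simp [hk]

lemma inv_diag_pos {m : Type*} [Fintype m] [DecidableEq m] (M : Matrix m m ℝ)
    (hdiag : ∀ i, M i i = 2) (hoff : ∀ i j, i ≠ j → M i j ≤ 0)
    (hu : IsUnit M) (hinv : ∀ i j, 0 ≤ M⁻¹ i j) (i : m) : (1:ℝ)/2 ≤ M⁻¹ i i := by
  have h1 : (M⁻¹ * M) i i = 1 := by
    rw [Matrix.nonsing_inv_mul M ((Matrix.isUnit_iff_isUnit_det M).mp hu)]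
    simp [Matrix.one_apply]
  rw [Matrix.mul_apply] at h1
  rw [← Finset.add_sum_erase _ _ (Finset.mem_univ i)] at h1
  have h2 : ∑ k ∈ Finset.univ.erase i, M⁻¹ i k * M k i ≤ 0 := by
    refine Finset.sum_nonpos fun k hk => ?_
    exact mul_nonpos_of_nonneg_of_nonpos (hinv i k) (hoff k i (Finset.ne_of_mem_erase hk))
  rw [hdiag i] at h1
  linarith

lemma single_not_mem_cone {n : ℕ} (C : Matrix (Fin n) (Fin n) ℝ)
    (hdiag : ∀ i, C i i = 2) (hoff : ∀ i j, i ≠ j → C i j ≤ 0)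
    (hprin : ∀ S : Finset (Fin n), S.Nonempty →
      IsUnit (C.submatrix (fun a : S => (a : Fin n)) (fun a : S => (a : Fin n))) ∧
      ∀ i j : S,
        0 ≤ (C.submatrix (fun a : S => (a : Fin n)) (fun a : S => (a : Fin n)))⁻¹ i j)
    (S K : Finset (Fin n)) (hdisj : Disjoint S K)
    (ℓ : Fin n) (hℓ : ℓ ∈ S) :
    (Pi.single ℓ 1 : Fin n → ℝ) ∉ sigmaCone C S K := by
  rintro ⟨x, y, hx, hy, heq⟩
  obtain ⟨hu, hinv⟩ := hprin S ⟨ℓ, hℓ⟩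
  set M := C.submatrix (fun a : S => (a : Fin n)) (fun a : S => (a : Fin n)) with hM
  set lhat : S := ⟨ℓ, hℓ⟩ with hlhat
  have key : M *ᵥ (fun j : S => x j) = -(Pi.single lhat 1 : S → ℝ) := by
    funext i
    have hcoord := congrFun heq (i : Fin n)
    simp only [Pi.add_apply, Finset.sum_apply, Pi.smul_apply, Pi.neg_apply,
      smul_eq_mul] at hcoord
    have hzero : ∀ k ∈ K, y k * (Pi.single k 1 : Fin n → ℝ) (i : Fin n) = 0 := by
      intro k hk
      have : (i : Fin n) ≠ k := by
        intro h
        exact (Finset.disjoint_left.mp hdisj i.2) (h ▸ hk)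
      rw [Pi.single_eq_of_ne this, mul_zero]
    rw [Finset.sum_eq_zero hzero, add_zero] at hcoord
    have hsum : (M *ᵥ (fun j : S => x j)) i = ∑ j ∈ S, C (i : Fin n) j * x j := by
      rw [Matrix.mulVec, dotProduct]
      exact Finset.sum_coe_sort S (fun j => C (i : Fin n) j * x j)
    rw [hsum]
    have : ∑ j ∈ S, C (i : Fin n) j * x j = -(Pi.single ℓ 1 : Fin n → ℝ) (i : Fin n) := by
      rw [hcoord]
      rw [← Finset.sum_neg_distrib]
      refine Finset.sum_congr rfl fun j _ => by unfold acoroot; ring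
    rw [this]
    simp only [Pi.neg_apply, Pi.single_apply, hlhat, Subtype.ext_iff]
  have hxv : (fun j : S => x j) = M⁻¹ *ᵥ (-(Pi.single lhat 1 : S → ℝ)) := by
    rw [← key, Matrix.mulVec_mulVec,
      Matrix.nonsing_inv_mul M ((Matrix.isUnit_iff_isUnit_det M).mp hu), Matrix.one_mulVec]
  have hxl : x ℓ = -(M⁻¹ lhat lhat) := by
    have h := congrFun hxv lhat
    rw [Matrix.mulVec_neg, Matrix.mulVec_single] at h
    simpa using h
  have hpos := inv_diag_pos M (fun i => hdiag i) 
    (fun i j hij => hoff i j (fun h => hij (Subtype.ext h))) hu hinv lhat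
  have := hx ℓ hℓ
  rw [hxl] at this
  linarith

lemma span_cone_top {n : ℕ} (C : Matrix (Fin n) (Fin n) ℝ)
    (hprin : ∀ S : Finset (Fin n), S.Nonempty →
      IsUnit (C.submatrix (fun a : S => (a : Fin n)) (fun a : S => (a : Fin n))) ∧
      ∀ i j : S,
        0 ≤ (C.submatrix (fun a : S => (a : Fin n)) (fun a : S => (a : Fin n)))⁻¹ i j)
    (S K : Finset (Fin n)) (hdisj : Disjoint S K)
    (huniv : S ∪ K = Finset.univ) :
    Submodule.span ℝ (sigmaCone C S K) = ⊤ := by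
  have hsingle : ∀ i : Fin n,
      (Pi.single i 1 : Fin n → ℝ) ∈ Submodule.span ℝ (sigmaCone C S K) := by
    intro i
    by_cases hiK : i ∈ K
    · exact Submodule.subset_span (single_mem C hiK)
    have hiS : i ∈ S := by
      have h := Finset.mem_univ i
      rw [← huniv] at h
      rcases Finset.mem_union.mp h with h | h
      · exact h
      · exact absurd h hiK
    obtain ⟨hu, hinv⟩ := hprin S ⟨i, hiS⟩
    set M := C.submatrix (fun a : S => (a : Fin n)) (fun a : S => (a : Fin n)) with hM
    have hw : ∀ j : S, (fun i' => if i' ∈ S then C i' (j : Fin n) else 0)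
        ∈ Submodule.span ℝ (sigmaCone C S K) := by
      intro j
      have h1 : acoroot C (j : Fin n) ∈ Submodule.span ℝ (sigmaCone C S K) := by
        have := (Submodule.span ℝ (sigmaCone C S K)).neg_mem
          (Submodule.subset_span (neg_acoroot_mem C (K := K) j.2))
        simpa using this
      have heq : (fun i' => if i' ∈ S then C i' (j : Fin n) else 0)
          = acoroot C (j : Fin n)
            - ∑ k ∈ K, (C k (j : Fin n)) • (Pi.single k 1 : Fin n → ℝ) := by
        funext i'
        simp only [Pi.sub_apply, Finset.sum_apply, Pi.smul_apply, smul_eq_mul]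
        by_cases h : i' ∈ K
        · rw [if_neg (Finset.disjoint_right.mp hdisj h)]
          have hsum : ∑ k ∈ K, C k (j : Fin n) * (Pi.single k 1 : Fin n → ℝ) i'
              = C i' (j : Fin n) := by
            rw [show (∑ k ∈ K, C k (j : Fin n) * (Pi.single k 1 : Fin n → ℝ) i')
                = ∑ k ∈ K, (if k = i' then C k (j : Fin n) else 0) from
              Finset.sum_congr rfl fun k _ => by
                rcases eq_or_ne k i' with h' | h'
                · subst h'; simp
                · simp [h', Pi.single_eq_of_ne (Ne.symm h')]]
            simp [Finset.sum_ite_eq', h]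
          rw [hsum]
          show (0:ℝ) = C i' (j : Fin n) - C i' (j : Fin n)
          ring
        · have hiS' : i' ∈ S := by
            have hu' := Finset.mem_univ i'
            rw [← huniv] at hu'
            rcases Finset.mem_union.mp hu' with h' | h'
            · exact h'
            · exact absurd h' h
          rw [if_pos hiS']
          have hsum : ∑ k ∈ K, C k (j : Fin n) * (Pi.single k 1 : Fin n → ℝ) i' = 0 := by
            refine Finset.sum_eq_zero fun k hk => ?_
            have : i' ≠ k := fun hh => h (hh ▸ hk)
            rw [Pi.single_eq_of_ne this, mul_zero]
          rw [hsum]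
          show C i' (j : Fin n) = acoroot C (j : Fin n) i' - 0
          unfold acoroot
          ring
      rw [heq]
      exact Submodule.sub_mem _ h1 (Submodule.sum_mem _ fun k hk =>
        Submodule.smul_mem _ _ (Submodule.subset_span (single_mem C hk)))
    have hrep : (Pi.single i 1 : Fin n → ℝ)
        = ∑ j : S, M⁻¹ j ⟨i, hiS⟩ • (fun i' => if i' ∈ S then C i' (j : Fin n) else 0) := by
      funext i'
      rw [Finset.sum_apply]
      simp only [Pi.smul_apply, smul_eq_mul]
      by_cases h : i' ∈ S
      · have hstep : ∑ j : S, M⁻¹ j ⟨i, hiS⟩ * (if i' ∈ S then C i' (j : Fin n) else 0)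
            = ∑ j : S, M ⟨i', h⟩ j * M⁻¹ j ⟨i, hiS⟩ := by
          refine Finset.sum_congr rfl fun j _ => ?_
          rw [if_pos h]
          show M⁻¹ j ⟨i, hiS⟩ * C i' (j : Fin n) = C i' (j : Fin n) * M⁻¹ j ⟨i, hiS⟩
          ring
        rw [hstep, ← Matrix.mul_apply,
          Matrix.mul_nonsing_inv M ((Matrix.isUnit_iff_isUnit_det M).mp hu)]
        simp [Matrix.one_apply, Pi.single_apply, Subtype.ext_iff]
      · have : ∑ j : S, M⁻¹ j ⟨i, hiS⟩ * (if i' ∈ S then C i' (j : Fin n) else 0) = 0 := by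
          refine Finset.sum_eq_zero fun j _ => by rw [if_neg h, mul_zero]
        rw [this, Pi.single_eq_of_ne (fun hh : i' = i => h (by rw [hh]; exact hiS))]
    rw [hrep]
    exact Submodule.sum_mem _ fun j _ => Submodule.smul_mem _ _ (hw j)
  rw [eq_top_iff]
  rintro v -
  have hv : v = ∑ i, v i • (Pi.single i 1 : Fin n → ℝ) := by
    funext i'
    rw [Finset.sum_apply]
    simp only [Pi.smul_apply, smul_eq_mul]
    rw [show (∑ i, v i * (Pi.single i 1 : Fin n → ℝ) i')
        = ∑ i, (if i = i' then v i else 0) from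
      Finset.sum_congr rfl fun i _ => by
        rcases eq_or_ne i i' with h | h
        · subst h; simp
        · simp [h, Pi.single_eq_of_ne (Ne.symm h)]]
    simp
  rw [hv]
  exact Submodule.sum_mem _ fun i _ => Submodule.smul_mem _ _ (hsingle i)

theorem stmt_7
    (n : ℕ) (hn : 1 ≤ n) (C : Matrix (Fin n) (Fin n) ℝ)
    (hdiag : ∀ i, C i i = 2)
    (hoff : ∀ i j, i ≠ j → C i j ≤ 0)
    (hprin : ∀ S : Finset (Fin n), S.Nonempty →
      IsUnit (C.submatrix (fun a : S => (a : Fin n)) (fun a : S => (a : Fin n))) ∧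
      ∀ i j : S,
        0 ≤ (C.submatrix (fun a : S => (a : Fin n)) (fun a : S => (a : Fin n)))⁻¹ i j)
    (J K : Finset (Fin n)) (hJK : Disjoint J K)
    (hcard : J.card + K.card = n - 1)
    (ℓ : Fin n) (hℓ : ℓ ∉ J ∪ K) :
    sigmaCone C J K ⊆ sigmaCone C (insert ℓ J) K ∧
    sigmaCone C J K ⊆ sigmaCone C J (insert ℓ K) ∧
    sigmaCone C (insert ℓ J) K ≠ sigmaCone C J (insert ℓ K) ∧
    Submodule.span ℝ (sigmaCone C (insert ℓ J) K) = ⊤ ∧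
    Submodule.span ℝ (sigmaCone C J (insert ℓ K)) = ⊤ := by
  have hℓJ : ℓ ∉ J := fun h => hℓ (Finset.mem_union_left K h)
  have hℓK : ℓ ∉ K := fun h => hℓ (Finset.mem_union_right J h)
  have hdisj1 : Disjoint (insert ℓ J) K := by
    rw [Finset.disjoint_insert_left]; exact ⟨hℓK, hJK⟩
  have hdisj2 : Disjoint J (insert ℓ K) := by
    rw [Finset.disjoint_insert_right]; exact ⟨hℓJ, hJK⟩
  have huniv : insert ℓ (J ∪ K) = Finset.univ := by
    apply Finset.eq_univ_of_card
    rw [Finset.card_insert_of_notMem hℓ, Finset.card_union_of_disjoint hJK, hcard,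
      Fintype.card_fin]
    omega
  have huniv1 : insert ℓ J ∪ K = Finset.univ := by
    rw [Finset.insert_union]; exact huniv
  have huniv2 : J ∪ insert ℓ K = Finset.univ := by
    rw [Finset.union_insert]; exact huniv
  refine ⟨sigmaCone_mono C (Finset.subset_insert ℓ J) (subset_refl K),
    sigmaCone_mono C (subset_refl J) (Finset.subset_insert ℓ K), ?_, ?_, ?_⟩
  · intro h
    have hmem : (Pi.single ℓ 1 : Fin n → ℝ) ∈ sigmaCone C (insert ℓ J) K := by
      rw [h]
      exact single_mem C (Finset.mem_insert_self ℓ K)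
    exact single_not_mem_cone C hdiag hoff hprin (insert ℓ J) K hdisj1 ℓ
      (Finset.mem_insert_self ℓ J) hmem
  · exact span_cone_top C hprin (insert ℓ J) K hdisj1 huniv1
  · exact span_cone_top C hprin J (insert ℓ K) hdisj2 huniv2
end

section
/- The collection of cones {σ_J : J ⊆ I} covers the whole space: every vector v ∈ ℝ^n lies in σ_J for some subset J ⊆ I. Equivalently, the fan Σ = {σ_{J,K} : J, K ⊆ I disjoint} is complete, i.e. its support ⋃_{J⊆I} σ_J equals ℝ^n. -/
/-!
Given `v`, solve the linear complementarity problem: find `z ≥ 0` with `w := C z + v ≥ 0` and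
`zᵢ wᵢ = 0` for all `i`. Then `v = -C z + w = ∑_{j ∈ J} z_j (-α^∨_j) + ∑_{k ∉ J} w_k e_k` with
`J = {j | z_j > 0}`, so `v ∈ σ_J`. The problem is feasible because `C⁻¹ ≥ 0` (take `z = C⁻¹ |v|`),
and since `C` is a Z-matrix with positive diagonal, a feasible point minimising `∑ zᵢ` is
complementary: decreasing a coordinate `zᵢ > 0` with `wᵢ > 0` slightly keeps it feasible.
-/

open Matrix

namespace Matrix

variable {ι : Type*} [Fintype ι]

/-- Feasible set of the linear complementarity problem `x ≥ 0, C x + v ≥ 0, xᵢ (C x + v)ᵢ = 0`. -/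
def lcpFeasible (C : Matrix ι ι ℝ) (v : ι → ℝ) : Set (ι → ℝ) :=
  {x | 0 ≤ x ∧ 0 ≤ C *ᵥ x + v}

theorem isClosed_lcpFeasible (C : Matrix ι ι ℝ) (v : ι → ℝ) : IsClosed (lcpFeasible C v) :=
  (isClosed_le continuous_const continuous_id).inter
    (isClosed_le continuous_const
      ((continuous_const.matrix_mulVec continuous_id).add continuous_const))

theorem lcpFeasible_nonempty_of_inv_nonneg [DecidableEq ι] {C : Matrix ι ι ℝ} (hC : IsUnit C)
    (hinv : ∀ i j, 0 ≤ C⁻¹ i j) (v : ι → ℝ) : (lcpFeasible C v).Nonempty := by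
  refine ⟨C⁻¹ *ᵥ |v|, fun i => ?_, fun i => ?_⟩
  · exact Finset.sum_nonneg fun j _ => mul_nonneg (hinv i j) (abs_nonneg (v j))
  · rw [mulVec_mulVec, mul_nonsing_inv C ((isUnit_iff_isUnit_det C).mp hC), one_mulVec]
    simpa [← neg_le_iff_add_nonneg'] using neg_abs_le (v i)

theorem sub_smul_single_mem_lcpFeasible [DecidableEq ι] {C : Matrix ι ι ℝ} {v z : ι → ℝ}
    (hz : z ∈ lcpFeasible C v) (hoff : ∀ i j, i ≠ j → C i j ≤ 0) {i : ι} {ε : ℝ}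
    (hε : 0 ≤ ε) (hεz : ε ≤ z i) (hεC : ε * C i i ≤ (C *ᵥ z + v) i) :
    z - ε • Pi.single i 1 ∈ lcpFeasible C v := by
  refine ⟨fun j => ?_, fun j => ?_⟩
  · rcases eq_or_ne j i with rfl | hji
    · simpa using hεz
    · simpa [hji] using hz.1 j
  · have hw := hz.2 j
    rw [mulVec_sub, mulVec_smul, mulVec_single_one]
    rcases eq_or_ne j i with rfl | hji
    · simp only [Pi.add_apply, Pi.sub_apply, Pi.smul_apply, col_apply, smul_eq_mul,
        Pi.zero_apply] at hεC ⊢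
      linarith
    · simp only [Pi.add_apply, Pi.sub_apply, Pi.smul_apply, col_apply, smul_eq_mul,
        Pi.zero_apply] at hw ⊢
      nlinarith [hoff j i hji]

theorem exists_complementary_mem_lcpFeasible [DecidableEq ι] {C : Matrix ι ι ℝ} {v : ι → ℝ}
    (hdiag : ∀ i, 0 < C i i) (hoff : ∀ i j, i ≠ j → C i j ≤ 0)
    (hfeas : (lcpFeasible C v).Nonempty) :
    ∃ z ∈ lcpFeasible C v, ∀ i, z i = 0 ∨ (C *ᵥ z + v) i = 0 := by
  obtain ⟨x₀, hx₀⟩ := hfeas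
  obtain ⟨z, ⟨⟨-, hzx₀⟩, hz⟩, hmin⟩ :=
    (isCompact_Icc.inter_right (isClosed_lcpFeasible C v)).exists_isMinOn
      ⟨x₀, ⟨hx₀.1, le_rfl⟩, hx₀⟩ (continuous_finsetSum Finset.univ fun i _ =>
        continuous_apply i).continuousOn
  refine ⟨z, hz, fun i => ?_⟩
  by_contra! hpos
  have hzi : 0 < z i := (hz.1 i).lt_of_ne' hpos.1
  have hwi : 0 < (C *ᵥ z + v) i := (hz.2 i).lt_of_ne' hpos.2
  set ε := min (z i) ((C *ᵥ z + v) i / C i i)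
  have hε : 0 < ε := lt_min hzi (div_pos hwi (hdiag i))
  have hεC : ε * C i i ≤ (C *ᵥ z + v) i :=
    (le_div_iff₀ (hdiag i)).mp (min_le_right _ _)
  set z' : ι → ℝ := z - ε • Pi.single i 1
  have hz' : z' ∈ lcpFeasible C v :=
    sub_smul_single_mem_lcpFeasible hz hoff hε.le (min_le_left _ _) hεC
  have hz'z : z' ≤ z := sub_le_self _ (smul_nonneg hε.le (Pi.single_nonneg.mpr zero_le_one))
  have hsum : ∑ j, z' j = ∑ j, z j - ε := by
    simp [z', Finset.sum_sub_distrib, ← Finset.mul_sum]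
  have hzmin : ∑ j, z j ≤ ∑ j, z' j := hmin ⟨⟨hz'.1, hz'z.trans hzx₀⟩, hz'⟩
  linarith

theorem isUnit_and_inv_nonneg_of_submatrix_univ [DecidableEq ι] {C : Matrix ι ι ℝ}
    (h : (Finset.univ : Finset ι).Nonempty →
      IsUnit (C.submatrix (fun a : (Finset.univ : Finset ι) => (a : ι))
        (fun a : (Finset.univ : Finset ι) => (a : ι))) ∧
      ∀ i j, 0 ≤ (C.submatrix (fun a : (Finset.univ : Finset ι) => (a : ι))
        (fun a : (Finset.univ : Finset ι) => (a : ι)))⁻¹ i j) :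
    IsUnit C ∧ ∀ i j, 0 ≤ C⁻¹ i j := by
  cases isEmpty_or_nonempty ι
  · exact ⟨isUnit_of_subsingleton C, isEmptyElim⟩
  obtain ⟨hunit, hinv⟩ := h Finset.univ_nonempty
  let e : (Finset.univ : Finset ι) ≃ ι := Equiv.subtypeUnivEquiv Finset.mem_univ
  change IsUnit (C.submatrix e e) at hunit
  change ∀ i j, 0 ≤ (C.submatrix e e)⁻¹ i j at hinv
  rw [inv_submatrix_equiv] at hinv
  exact ⟨(isUnit_submatrix_equiv e e).mp hunit,
    fun i j => by simpa using hinv (e.symm i) (e.symm j)⟩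

end Matrix

theorem sum_smul_neg_acoroot {n : ℕ} (C : Matrix (Fin n) (Fin n) ℝ) (z : Fin n → ℝ) :
    ∑ j, z j • (-acoroot C j) = -(C *ᵥ z) := by
  ext i
  simp [acoroot, mulVec, dotProduct, Finset.sum_apply, mul_comm]

theorem mem_sigmaCone_of_complementary {n : ℕ} {C : Matrix (Fin n) (Fin n) ℝ} {v z : Fin n → ℝ}
    (hz : z ∈ C.lcpFeasible v) (hcomp : ∀ i, z i = 0 ∨ (C *ᵥ z + v) i = 0) :
    v ∈ sigmaCone C {i | 0 < z i} ({i | 0 < z i} : Finset (Fin n))ᶜ := by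
  set w := C *ᵥ z + v
  refine ⟨z, w, fun j _ => hz.1 j, fun k _ => hz.2 k, ?_⟩
  have hJ : ∑ j ∈ {i | 0 < z i}, z j • (-acoroot C j) = -(C *ᵥ z) := by
    rw [← sum_smul_neg_acoroot, Finset.sum_subset (Finset.subset_univ _)]
    intro j _ hj
    have hzj : z j = 0 := le_antisymm (by simpa using hj) (hz.1 j)
    simp [hzj]
  have hK : ∑ k ∈ ({i | 0 < z i} : Finset (Fin n))ᶜ, w k • (Pi.single k 1 : Fin n → ℝ) = w := by
    conv_rhs => rw [pi_eq_sum_univ' w]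
    refine Finset.sum_subset (Finset.subset_univ _) fun k _ hk => ?_
    have hzk : 0 < z k := by simpa using hk
    simp [(hcomp k).resolve_left hzk.ne']
  rw [hJ, hK]
  simp [w]

theorem stmt_8_general
    (n : ℕ) (C : Matrix (Fin n) (Fin n) ℝ)
    (hdiag : ∀ i, C i i = 2)
    (hoff : ∀ i j, i ≠ j → C i j ≤ 0)
    (hprin : ∀ S : Finset (Fin n), S.Nonempty →
      IsUnit (C.submatrix (fun a : S => (a : Fin n)) (fun a : S => (a : Fin n))) ∧
      ∀ i j : S,
        0 ≤ (C.submatrix (fun a : S => (a : Fin n)) (fun a : S => (a : Fin n)))⁻¹ i j) :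
    (⋃ J : Finset (Fin n), sigmaCone C J Jᶜ) = Set.univ := by
  obtain ⟨hunit, hinv⟩ := isUnit_and_inv_nonneg_of_submatrix_univ (hprin Finset.univ)
  refine Set.eq_univ_of_forall fun v => Set.mem_iUnion.mpr ?_
  obtain ⟨z, hz, hcomp⟩ := exists_complementary_mem_lcpFeasible
    (fun i => by simp [hdiag]) hoff (lcpFeasible_nonempty_of_inv_nonneg hunit hinv v)
  exact ⟨_, mem_sigmaCone_of_complementary hz hcomp⟩

theorem stmt_8
    (n : ℕ) (hn : 1 ≤ n) (C : Matrix (Fin n) (Fin n) ℝ)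
    (hdiag : ∀ i, C i i = 2)
    (hoff : ∀ i j, i ≠ j → C i j ≤ 0)
    (hprin : ∀ S : Finset (Fin n), S.Nonempty →
      IsUnit (C.submatrix (fun a : S => (a : Fin n)) (fun a : S => (a : Fin n))) ∧
      ∀ i j : S,
        0 ≤ (C.submatrix (fun a : S => (a : Fin n)) (fun a : S => (a : Fin n)))⁻¹ i j) :
    (⋃ J : Finset (Fin n), sigmaCone C J Jᶜ) = Set.univ :=
  stmt_8_general n C hdiag hoff hprin
end

section
/- (Wall relation nonnegativity.) Let J, K ⊆ I be disjoint with |J| + |K| = n − 1 and let ℓ ∈ I − (J ∪ K). Suppose real numbers x_ℓ > 0, y_ℓ > 0, x_j (j ∈ J), and y_k (k ∈ K) satisfy the linear relation x_ℓ(−α^∨_ℓ) + Σ_{j∈J} x_j(−α^∨_j) + Σ_{k∈K} y_k e_k + y_ℓ e_ℓ = 0 in ℝ^n. Then x_j ≥ 0 for every j ∈ J. -/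
/-!
Restrict the relation to the coordinates in `S = {ℓ} ∪ J`. There the vectors `e_k` (`k ∈ K`)
vanish, so the relation says `C_S x_S = y_ℓ e_ℓ`. As `C_S` is invertible with nonnegative inverse,
`x_S = C_S⁻¹ (y_ℓ e_ℓ)` is a nonnegative vector.
-/

open Matrix

namespace Matrix

variable {m R : Type*} [Fintype m] [CommRing R] [PartialOrder R] [IsOrderedRing R]

lemma mulVec_nonneg {A : Matrix m m R} (hA : ∀ i j, 0 ≤ A i j) {v : m → R} (hv : 0 ≤ v) :
    0 ≤ A *ᵥ v :=
  fun _ => Finset.sum_nonneg fun j _ => mul_nonneg (hA _ j) (hv j)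

lemma nonneg_of_mulVec_eq_of_inv_nonneg [DecidableEq m] {A : Matrix m m R} (hA : IsUnit A)
    (hinv : ∀ i j, 0 ≤ A⁻¹ i j) {v b : m → R} (h : A *ᵥ v = b) (hb : 0 ≤ b) : 0 ≤ v := by
  have : Invertible A := hA.invertible
  rw [← inv_mulVec_eq_vec h.symm]
  exact mulVec_nonneg hinv hb

end Matrix

lemma sum_smul_single_apply_of_notMem {ι R : Type*} [DecidableEq ι] [Semiring R]
    {K : Finset ι} {i : ι} (hi : i ∉ K) (y : ι → R) :
    (∑ k ∈ K, y k • (Pi.single k 1 : ι → R)) i = 0 := by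
  simp [Finset.sum_apply, Pi.single_apply, hi]

lemma sum_insert_mul_eq_single_of_wall_relation {n : ℕ} (C : Matrix (Fin n) (Fin n) ℝ)
    {J K : Finset (Fin n)} {ℓ : Fin n} (hℓJ : ℓ ∉ J) (x y : Fin n → ℝ)
    (heq : x ℓ • (-acoroot C ℓ) + (∑ j ∈ J, x j • (-acoroot C j))
         + (∑ k ∈ K, y k • (Pi.single k 1 : Fin n → ℝ))
         + y ℓ • (Pi.single ℓ 1 : Fin n → ℝ) = 0)
    {i : Fin n} (hi : i ∉ K) :
    ∑ m ∈ insert ℓ J, C i m * x m = (Pi.single ℓ (y ℓ) : Fin n → ℝ) i := by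
  have hrow := congrFun heq i
  simp only [Pi.add_apply, sum_smul_single_apply_of_notMem hi, Finset.sum_apply, Pi.smul_apply,
    Pi.neg_apply, acoroot, smul_eq_mul, Pi.zero_apply, mul_neg, Finset.sum_neg_distrib] at hrow
  have hsingle : (Pi.single ℓ (y ℓ) : Fin n → ℝ) i = y ℓ * (Pi.single ℓ 1 : Fin n → ℝ) i := by
    rw [Pi.single_apply, Pi.single_apply, mul_ite, mul_one, mul_zero]
  have hcomm : ∑ m ∈ J, C i m * x m = ∑ m ∈ J, x m * C i m :=
    Finset.sum_congr rfl fun _ _ => mul_comm _ _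
  rw [Finset.sum_insert hℓJ, hsingle, hcomm]
  linarith

theorem stmt_9_general
    (n : ℕ) (C : Matrix (Fin n) (Fin n) ℝ)
    (hprin : ∀ S : Finset (Fin n), S.Nonempty →
      IsUnit (C.submatrix (fun a : S => (a : Fin n)) (fun a : S => (a : Fin n))) ∧
      ∀ i j : S,
        0 ≤ (C.submatrix (fun a : S => (a : Fin n)) (fun a : S => (a : Fin n)))⁻¹ i j)
    (J K : Finset (Fin n)) (hJK : Disjoint J K)
    (ℓ : Fin n) (hℓ : ℓ ∉ J ∪ K)
    (x y : Fin n → ℝ) (hyℓ : 0 < y ℓ)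
    (heq : x ℓ • (-acoroot C ℓ) + (∑ j ∈ J, x j • (-acoroot C j))
         + (∑ k ∈ K, y k • (Pi.single k 1 : Fin n → ℝ))
         + y ℓ • (Pi.single ℓ 1 : Fin n → ℝ) = 0) :
    ∀ j ∈ J, 0 ≤ x j := by
  intro j hj
  obtain ⟨hℓJ, hℓK⟩ : ℓ ∉ J ∧ ℓ ∉ K := by simpa [not_or] using hℓ
  set S := insert ℓ J
  obtain ⟨hunit, hinv⟩ := hprin S (Finset.insert_nonempty ℓ J)
  have hS_K : ∀ i ∈ S, i ∉ K := by
    simpa [S, Finset.forall_mem_insert] using ⟨hℓK, Finset.disjoint_left.mp hJK⟩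
  have hrestrict : C.submatrix ((↑) : S → Fin n) (↑) *ᵥ (fun m : S => x m) =
      fun i : S => (Pi.single ℓ (y ℓ) : Fin n → ℝ) i := by
    funext i
    rw [mulVec, dotProduct, ← sum_insert_mul_eq_single_of_wall_relation C hℓJ x y heq (hS_K i i.2)]
    exact Finset.sum_coe_sort S (fun m => C i m * x m)
  have hxS := nonneg_of_mulVec_eq_of_inv_nonneg hunit hinv hrestrict
    fun i => (Pi.single_nonneg.2 hyℓ.le : (0 : Fin n → ℝ) ≤ Pi.single ℓ (y ℓ)) i
  exact hxS ⟨j, Finset.mem_insert_of_mem hj⟩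

theorem stmt_9
    (n : ℕ) (hn : 1 ≤ n) (C : Matrix (Fin n) (Fin n) ℝ)
    (hdiag : ∀ i, C i i = 2)
    (hoff : ∀ i j, i ≠ j → C i j ≤ 0)
    (hprin : ∀ S : Finset (Fin n), S.Nonempty →
      IsUnit (C.submatrix (fun a : S => (a : Fin n)) (fun a : S => (a : Fin n))) ∧
      ∀ i j : S,
        0 ≤ (C.submatrix (fun a : S => (a : Fin n)) (fun a : S => (a : Fin n)))⁻¹ i j)
    (J K : Finset (Fin n)) (hJK : Disjoint J K)
    (hcard : J.card + K.card = n - 1)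
    (ℓ : Fin n) (hℓ : ℓ ∉ J ∪ K)
    (x y : Fin n → ℝ) (hxℓ : 0 < x ℓ) (hyℓ : 0 < y ℓ)
    (heq : x ℓ • (-acoroot C ℓ) + (∑ j ∈ J, x j • (-acoroot C j))
         + (∑ k ∈ K, y k • (Pi.single k 1 : Fin n → ℝ))
         + y ℓ • (Pi.single ℓ 1 : Fin n → ℝ) = 0) :
    ∀ j ∈ J, 0 ≤ x j :=
  stmt_9_general n C hprin J K hJK ℓ hℓ x y hyℓ heq
end
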